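/- arXiv:2509.02436 — 5 statements merged into one kernel-verified Lean document; each statement's English description precedes it below -/
import Mathlib

section
/- Let p be an odd prime with Property C (i.e., every sequence of length 3p-3 over (Z/pZ)^2 with no zero-sum subsequence of length ≤ p has the form a^(p-1) b^(p-1) c^(p-1)). If A is a sequence of length 4p-4 over (Z/pZ)^2 containing no zero-sum subsequence of length exactly p, then either A contains an element with multiplicity p-1, or every element of A has multiplicity at most p/2. -/
/-!
Translate an element of multiplicity `m > p / 2` to `0` and write `A = 0^m A'`. A zero-sum
subsequence `T` of `A'` with `p - m ≤ |T| ≤ p` could be padded with zeros to a zero-sum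
subsequence of length `p`, so no such `T` exists. Let `Z` be a longest zero-sum subsequence of
`A'` of length at most `p - 1 - m`; then `C = A' - Z` has no zero-sum subsequence of length
in `[1, p]`. Property C bounds the length of such sequences by `3p - 3` (a longer one would
contain sequences of length `3p - 3` of the wrong shape), so `|Z| = p - 1 - m` and
`C = a^(p-1) b^(p-1) c^(p-1)`. For `w ∈ Z`, the sequence `w` followed by `C` minus one term has
length `3p - 3` but not that shape, which yields `U ≤ C` with `w + ΣU = 0` and `|U| < p`.
Adjoining the zero-sum blocks `w U` for `w ∈ Z` one at a time produces zero-sum subsequences of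
`A'` whose lengths grow by less than `p - m` per step up to at least `2|Z|`, so one of them
falls into the forbidden window `[p - m, p]` unless `m = p - 1`.
-/

open Multiset

section ZeroSums

variable {G : Type*} [AddCommGroup G]

def NoZeroSumOfLength (n : ℕ) (S : Multiset G) : Prop :=
  ∀ T ≤ S, card T = n → T.sum ≠ 0

def NoShortZeroSum (n : ℕ) (S : Multiset G) : Prop :=
  ∀ T ≤ S, T ≠ 0 → card T ≤ n → T.sum ≠ 0

variable (G) in
def PropertyC (p : ℕ) : Prop :=
  ∀ B : Multiset G, card B = 3 * p - 3 → NoShortZeroSum p B →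
    ∃ a b c : G, a ≠ b ∧ a ≠ c ∧ b ≠ c ∧
      B = replicate (p - 1) a + replicate (p - 1) b + replicate (p - 1) c

variable {p m : ℕ} {S A A' : Multiset G}

theorem Multiset.exists_le_card_eq {α : Type*} {s : Multiset α} {n : ℕ} (h : n ≤ card s) :
    ∃ t ≤ s, card t = n := by
  obtain ⟨t, ht⟩ := card_pos_iff_exists_mem.mp
    (by rw [card_powersetCard]; exact Nat.choose_pos h : 0 < card (powersetCard n s))
  exact ⟨t, mem_powersetCard.mp ht⟩

theorem Multiset.le_of_card_le_count {α : Type*} [DecidableEq α] {s t : Multiset α} {n : ℕ}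
    (hcount : ∀ x ∈ s, n ≤ count x t) (hcard : card s ≤ n) : s ≤ t := by
  refine le_iff_count.mpr fun x => ?_
  by_cases hx : x ∈ s
  · exact (count_le_card x s).trans (hcard.trans (hcount x hx))
  · simp [count_eq_zero_of_notMem hx]

theorem NoShortZeroSum.mono {T : Multiset G} (hS : NoShortZeroSum p S) (hT : T ≤ S) :
    NoShortZeroSum p T :=
  fun U hU => hS U (hU.trans hT)

theorem NoShortZeroSum.noZeroSumOfLength (hS : NoShortZeroSum p S) (hp : 0 < p) :
    NoZeroSumOfLength p S :=
  fun T hT hcard => hS T hT (card_pos.mp (hcard ▸ hp)) hcard.le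

theorem NoZeroSumOfLength.map_add (hG : ∀ x : G, p • x = 0) (hS : NoZeroSumOfLength p S)
    (a : G) :
    NoZeroSumOfLength p (S.map (· + a)) := by
  intro T hT hcard hsum
  have hback : T.map (· + -a) ≤ S := by
    simpa [map_map, Function.comp_def] using map_le_map (f := (· + -a)) hT
  refine hS _ hback (by rw [card_map, hcard]) ?_
  rw [sum_map_add, map_id', map_const', sum_replicate, hcard, hG, hsum, add_zero]

theorem NoZeroSumOfLength.add_card_lt (hA : NoZeroSumOfLength p (replicate m 0 + A'))
    {T : Multiset G} (hT : T ≤ A') (hsum : T.sum = 0) (hcard : card T ≤ p) :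
    m + card T < p := by
  by_contra! h
  refine hA (replicate (p - card T) 0 + T)
    (add_le_add ((replicate_le_replicate 0).mpr (by omega)) hT) ?_ ?_
  · rw [card_add, card_replicate]; omega
  · rw [sum_add, sum_replicate, smul_zero, hsum, add_zero]

variable [DecidableEq G]

theorem NoZeroSumOfLength.count_lt (hG : ∀ x : G, p • x = 0) (hS : NoZeroSumOfLength p S)
    (x : G) :
    count x S < p := by
  by_contra! hx
  exact hS _ (le_count_iff_replicate_le.mp hx) (card_replicate p x)
    (by rw [sum_replicate, hG])

theorem PropertyC.count_eq_zero_or_eq (hC : PropertyC G p) (hcard : card S = 3 * p - 3)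
    (hS : NoShortZeroSum p S) (x : G) : count x S = 0 ∨ count x S = p - 1 := by
  obtain ⟨a, b, c, hab, hac, hbc, rfl⟩ := hC S hcard hS
  by_cases hax : a = x <;> by_cases hbx : b = x <;> by_cases hcx : c = x <;>
    simp_all [count_add, count_replicate]

theorem PropertyC.card_le (hC : PropertyC G p) (hG : ∀ x : G, p • x = 0) (hp : 3 ≤ p)
    (hS : NoShortZeroSum p S) : card S ≤ 3 * p - 3 := by
  by_contra! hbig
  obtain ⟨S', hS'S, hcard⟩ := exists_le_card_eq (n := 3 * p - 2) (s := S) (by omega)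
  have hS' := hS.mono hS'S
  have hdich : ∀ y ∈ S', ∀ x, count x (S'.erase y) = 0 ∨ count x (S'.erase y) = p - 1 :=
    fun y hy => hC.count_eq_zero_or_eq
      (by rw [card_erase_of_mem hy, Nat.pred_eq_sub_one]; omega) (hS'.mono (erase_le y S'))
  -- `count y (S'.erase y) = count y S' - 1 < p - 1` leaves only the value `0`
  have hsimple : ∀ y ∈ S', count y S' = 1 := by
    intro y hy
    have := hdich y hy y
    have := (hS'.noZeroSumOfLength (by omega)).count_lt hG y
    have := count_pos.mpr hy
    rw [count_erase_self] at *
    omega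
  obtain ⟨y, hy⟩ := exists_mem_of_ne_zero (card_pos.mp (by omega : 0 < card S'))
  have hcard' : 0 < card (S'.erase y) := by
    rw [card_erase_of_mem hy, Nat.pred_eq_sub_one]; omega
  obtain ⟨z, hz⟩ := exists_mem_of_ne_zero (card_pos.mp hcard')
  have := hdich y hy z
  have := count_pos.mpr hz
  have := count_le_of_le z (erase_le y S')
  have := hsimple z (mem_of_mem_erase hz)
  omega

theorem PropertyC.exists_add_sum_eq_zero (hC : PropertyC G p) (hp : 3 ≤ p)
    (hcard : card S = 3 * p - 3) (hS : NoShortZeroSum p S) {w : G} (hw : w ∉ S) :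
    ∃ U ≤ S, card U < p ∧ w + U.sum = 0 := by
  obtain ⟨y, hy⟩ := exists_mem_of_ne_zero (card_pos.mp (by omega : 0 < card S))
  have hwy : w ≠ y := fun h => hw (h ▸ hy)
  set S' := w ::ₘ S.erase y
  have hS'card : card S' = 3 * p - 3 := by
    rw [card_cons, card_erase_of_mem hy, Nat.pred_eq_sub_one]; omega
  have hS'zero : ¬ NoShortZeroSum p S' := by
    intro h
    have := hC.count_eq_zero_or_eq hS'card h w
    rw [count_cons_self, count_erase_of_ne hwy, count_eq_zero_of_notMem hw] at this
    omega
  simp only [NoShortZeroSum, not_forall, not_not] at hS'zero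
  obtain ⟨T, hTS', hT0, hTp, hTsum⟩ := hS'zero
  have hwT : w ∈ T := by
    by_contra hwT
    exact hS T (((le_cons_of_notMem hwT).mp hTS').trans (erase_le y S)) hT0 hTp hTsum
  refine ⟨T.erase w, ?_, ?_, ?_⟩
  · have := erase_le_erase w hTS'
    rw [erase_cons_head] at this
    exact this.trans (erase_le y S)
  · rw [card_erase_of_mem hwT, Nat.pred_eq_sub_one]; omega
  · rwa [← sum_cons, cons_erase hwT]

theorem NoZeroSumOfLength.exists_noShortZeroSum_tsub
    (hA : NoZeroSumOfLength p (replicate m 0 + A')) (hm : p < 2 * m) :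
    ∃ Z ≤ A', Z.sum = 0 ∧ card Z ≤ p - 1 - m ∧ NoShortZeroSum p (A' - Z) := by
  let cands := (powerset A').toFinset.filter fun Z => Z.sum = 0 ∧ card Z ≤ p - 1 - m
  obtain ⟨Z, hZ, hmax⟩ := cands.exists_max_image card ⟨0, by simp [cands]⟩
  simp only [cands, Finset.mem_filter, mem_toFinset, mem_powerset] at hZ hmax
  obtain ⟨hZA, hZsum, hZcard⟩ := hZ
  refine ⟨Z, hZA, hZsum, hZcard, fun T hT hT0 hTp hTsum => ?_⟩
  have hTZ : T + Z ≤ A' := (le_tsub_iff_right hZA).mp hT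
  have hsum : (T + Z).sum = 0 := by rw [sum_add, hTsum, hZsum, add_zero]
  have hTlt := hA.add_card_lt (hT.trans tsub_le_self) hTsum hTp
  have hTpos := card_pos.mpr hT0
  by_cases hshort : card (T + Z) ≤ p - 1 - m
  · have := hmax (T + Z) ⟨hTZ, hsum, hshort⟩
    rw [card_add] at this
    omega
  · have := hA.add_card_lt hTZ hsum (by rw [card_add] at hshort ⊢; omega)
    rw [card_add] at this hshort
    omega

theorem NoZeroSumOfLength.exists_zeroSum_completion
    (hA : NoZeroSumOfLength p (replicate m 0 + A')) (hm : p < 2 * m) {Z C : Multiset G}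
    (hZC : Z + C ≤ A') (hCcount : ∀ x ∈ C, p - 1 ≤ count x C)
    (hU : ∀ w ∈ Z, ∃ U ≤ C, 0 < card U ∧ card U < p ∧ w + U.sum = 0) :
    ∀ Y ≤ Z, ∃ V ≤ C, (Y + V).sum = 0 ∧ card Y ≤ card V ∧ m + card Y + card V < p := by
  intro Y
  induction Y using Multiset.induction_on with
  | empty =>
    intro _
    have := hA.add_card_lt (zero_le A') sum_zero (by simp)
    exact ⟨0, zero_le C, by simp, le_rfl, by simpa using this⟩
  | cons w Y ih =>
    intro hwY
    obtain ⟨V, hVC, hVsum, hYV, hYVlt⟩ := ih ((le_cons_self Y w).trans hwY)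
    have hw : w ∈ Z := mem_of_le hwY (mem_cons_self w Y)
    obtain ⟨U, hUC, hUpos, hUp, hUsum⟩ := hU w hw
    have hwUA : w ::ₘ U ≤ A' := by
      rw [← singleton_add]
      exact (add_le_add (singleton_le.mpr hw) hUC).trans hZC
    have hwUlt := hA.add_card_lt hwUA (by rwa [sum_cons]) (by rw [card_cons]; omega)
    rw [card_cons] at hwUlt
    -- `V + U` is too short to exceed any multiplicity `p - 1` of `C`
    have hVU : V + U ≤ C := by
      refine le_of_card_le_count (fun x hx => hCcount x ?_) (by rw [card_add]; omega)
      rcases mem_add.mp hx with hx | hx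
      exacts [mem_of_le hVC hx, mem_of_le hUC hx]
    have hsum : (w ::ₘ Y + (V + U)).sum = 0 := by
      rw [sum_add] at hVsum
      rw [cons_add, sum_cons, sum_add, sum_add,
        show w + (Y.sum + (V.sum + U.sum)) = (Y.sum + V.sum) + (w + U.sum) by abel,
        hVsum, hUsum, add_zero]
    have hlt := hA.add_card_lt ((add_le_add hwY hVU).trans hZC) hsum
      (by rw [card_add, card_add, card_cons]; omega)
    rw [card_add, card_add, card_cons] at hlt
    refine ⟨V + U, hVU, hsum, ?_, ?_⟩ <;> rw [card_add, card_cons] <;> omega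

theorem PropertyC.count_zero_eq (hC : PropertyC G p) (hG : ∀ x : G, p • x = 0) (hp : 3 ≤ p)
    (hcard : card A = 4 * p - 4) (hA : NoZeroSumOfLength p A) (hm : p < 2 * count 0 A) :
    count 0 A = p - 1 := by
  set m := count 0 A
  set A' := A.filter (· ≠ 0)
  have hsplit : replicate m 0 + A' = A := by
    rw [← filter_eq']
    exact filter_add_not _ A
  rw [← hsplit] at hA hcard
  rw [card_add, card_replicate] at hcard
  have hmp : m < p := by
    have := hA.count_lt hG 0
    rw [count_add, count_replicate_self] at this
    omega
  by_contra hne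
  obtain ⟨Z, hZA, hZsum, hZcard, hCfree⟩ := hA.exists_noShortZeroSum_tsub hm
  set C := A' - Z
  have hZC : Z + C = A' := add_tsub_cancel_of_le hZA
  have hCcard : card C = 3 * p - 3 := by
    have := hC.card_le hG hp hCfree
    have := congrArg card hZC
    rw [card_add] at this
    omega
  have hdich := hC.count_eq_zero_or_eq hCcard hCfree
  have hZC_disj : ∀ w ∈ Z, w ∉ C := by
    intro w hw hwC
    have hlt := hA.count_lt hG w
    rw [count_add, ← hZC, count_add] at hlt
    have := count_pos.mpr hw
    have := count_pos.mpr hwC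
    have := hdich w
    omega
  have hU : ∀ w ∈ Z, ∃ U ≤ C, 0 < card U ∧ card U < p ∧ w + U.sum = 0 := by
    intro w hw
    obtain ⟨U, hUC, hUp, hUsum⟩ := hC.exists_add_sum_eq_zero hp hCcard hCfree (hZC_disj w hw)
    refine ⟨U, hUC, card_pos.mpr ?_, hUp, hUsum⟩
    rintro rfl
    rw [sum_zero, add_zero] at hUsum
    exact (mem_filter.mp (mem_of_le hZA hw)).2 hUsum
  obtain ⟨V, -, -, hZV, hlt⟩ := hA.exists_zeroSum_completion hm hZC.le
    (fun x hx => by have := hdich x; have := count_pos.mpr hx; omega) hU Z le_rfl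
  have := congrArg card hZC
  rw [card_add] at this
  omega

end ZeroSums

/-- Let p be an odd prime with Property C. If A is a sequence of length
4p-4 over (Z/pZ)^2 with no zero-sum subsequence of length exactly p, then either A
contains an element with multiplicity p-1, or every element has multiplicity ≤ p/2. -/
theorem stmt0 (p : ℕ) (hp : p.Prime) (hodd : Odd p)
    (hC : ∀ B : Multiset (ZMod p × ZMod p), Multiset.card B = 3 * p - 3 →
      (∀ T : Multiset (ZMod p × ZMod p), T ≤ B → T ≠ 0 → Multiset.card T ≤ p → T.sum ≠ 0) →
      ∃ a b c : ZMod p × ZMod p, a ≠ b ∧ a ≠ c ∧ b ≠ c ∧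
        B = Multiset.replicate (p - 1) a + Multiset.replicate (p - 1) b +
            Multiset.replicate (p - 1) c)
    (A : Multiset (ZMod p × ZMod p)) (hA : Multiset.card A = 4 * p - 4)
    (hzs : ∀ T : Multiset (ZMod p × ZMod p), T ≤ A → Multiset.card T = p → T.sum ≠ 0) :
    (∃ a : ZMod p × ZMod p, A.count a = p - 1) ∨
    (∀ a : ZMod p × ZMod p, 2 * A.count a ≤ p) := by
  have hG : ∀ x : ZMod p × ZMod p, p • x = 0 := fun x => by ext <;> simp
  have hp3 : 3 ≤ p := by
    obtain ⟨k, rfl⟩ := hodd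
    have := hp.two_le
    omega
  refine or_iff_not_imp_right.mpr fun hbig => ?_
  push Not at hbig
  obtain ⟨a, ha⟩ := hbig
  have hcount : count 0 (A.map (· + -a)) = count a A := by
    rw [← count_map_eq_count' _ A (add_left_injective (-a)), add_neg_cancel]
  rw [← hcount] at ha
  exact ⟨a, hcount ▸ PropertyC.count_zero_eq hC hG hp3 (by rw [card_map, hA])
    (NoZeroSumOfLength.map_add hG hzs (-a)) ha⟩
end

section
/- Let p be an odd prime, t an element of Z/pZ, and δ > 0 with δp ≥ 2. Suppose t cannot be written as t ≡ a/b (mod p) with integers a, b satisfying 0 < |b| ≤ 4/δ and |a| ≤ 4/δ. Then the residues {0, t, 2t, ..., ⌊δp/2⌋·t} (mod p), viewed as elements of {0, 1, ..., p-1}, partition the interval [0, p] into subintervals each of length at most δp/2. -/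
/-!
Write `‖z‖` for `|z.valMinAbs|`, the distance of `z : ZMod p` to `0`. With `N = ⌊4/δ⌋ + 1`
the hypothesis says `‖m t‖ ≥ N` for `0 < m < N`. By pigeonhole, the first return `b` of the
orbit `m ↦ m t` into `(-C, C)` satisfies `b * C ≤ p`. Applied with `C = p/N + 1` and then with
`C = ‖b₁ t‖`, this gives returns `b₁, b₂ ≤ p/N`; they cannot both land on the negative side,
since then `b₂ - b₁` would be an earlier, closer return. So some `u ≤ p/N` has
`u t ∈ [1, p/N]`, and likewise (for `-t`) some `v ≤ p/N` has `v t ∈ [-p/N, -1]`. From any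
`ν t` with `ν ≤ ⌊δp/2⌋`, one of `ν + u`, `ν - v`, `ν + u - v` stays in range and moves the
point up by between `1` and `2p/N ≤ δp/2`, which bounds every gap.
-/

namespace ZMod

variable {p : ℕ}

lemma natAbs_valMinAbs_intCast_le [NeZero p] (k : ℤ) :
    (k : ZMod p).valMinAbs.natAbs ≤ k.natAbs :=
  natAbs_min_of_le_div_two p _ k (coe_valMinAbs _) (natAbs_valMinAbs_le _)

lemma natCast_natAbs_valMinAbs_of_nonneg [NeZero p] {x : ZMod p} (hx : 0 ≤ x.valMinAbs) :
    (x.valMinAbs.natAbs : ZMod p) = x := by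
  rw [natCast_natAbs_valMinAbs, if_pos ((valMinAbs_nonneg_iff x).1 hx)]

lemma natAbs_valMinAbs_sub_mul_lt [NeZero p] {t : ZMod p} {a b : ℕ} (hab : a ≤ b)
    (ha : ((a : ZMod p) * t).valMinAbs < 0) (hb : ((b : ZMod p) * t).valMinAbs < 0)
    (hlt : ((b : ZMod p) * t).valMinAbs.natAbs < ((a : ZMod p) * t).valMinAbs.natAbs) :
    (((b - a : ℕ) : ZMod p) * t).valMinAbs.natAbs < ((a : ZMod p) * t).valMinAbs.natAbs := by
  have hdiff : ((b - a : ℕ) : ZMod p) * t =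
      (((b : ZMod p) * t).valMinAbs - ((a : ZMod p) * t).valMinAbs : ℤ) := by
    push_cast [Nat.cast_sub hab, coe_valMinAbs]
    ring
  have := hdiff ▸ natAbs_valMinAbs_intCast_le
    (((b : ZMod p) * t).valMinAbs - ((a : ZMod p) * t).valMinAbs)
  omega

lemma mul_le_of_le_natAbs_valMinAbs_mul [NeZero p] {t : ZMod p} {b c : ℕ} (hcp : c ≤ p)
    (hfar : ∀ m : ℕ, 1 ≤ m → m < b → c ≤ ((m : ZMod p) * t).valMinAbs.natAbs) :
    b * c ≤ p := by
  have hclose : ∀ ν ν' : ℕ, ∀ i i' : Fin c, ν' < ν → ν < b →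
      (ν : ZMod p) * t + (i : ℕ) ≠ (ν' : ZMod p) * t + (i' : ℕ) := by
    intro ν ν' i i' hlt hb heq
    have hdiff : ((ν - ν' : ℕ) : ZMod p) * t = (((i' : ℤ) - i : ℤ) : ZMod p) := by
      push_cast [Nat.cast_sub hlt.le]
      linear_combination heq
    have := hdiff ▸ natAbs_valMinAbs_intCast_le (p := p) ((i' : ℤ) - i)
    have := hfar (ν - ν') (by omega) (by omega)
    omega
  have hinj : Function.Injective
      fun q : Fin b × Fin c => ((q.1 : ℕ) : ZMod p) * t + (q.2 : ℕ) := by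
    rintro ⟨ν, i⟩ ⟨ν', i'⟩ heq
    rcases lt_trichotomy (ν : ℕ) ν' with hlt | hν | hlt
    · exact absurd heq.symm (hclose ν' ν i' i hlt ν'.isLt)
    · simp only [hν, add_right_inj] at heq
      have := congrArg val heq
      rw [val_cast_of_lt (i.isLt.trans_le hcp), val_cast_of_lt (i'.isLt.trans_le hcp)] at this
      exact Prod.ext (Fin.ext hν) (Fin.ext this)
    · exact absurd heq (hclose ν ν' i i' hlt ν.isLt)
  simpa using Fintype.card_le_of_injective _ hinj

lemma exists_first_return [NeZero p] (t : ZMod p) {C : ℕ} (hC : 0 < C) (hCp : C ≤ p) :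
    ∃ b : ℕ, 1 ≤ b ∧ b * C ≤ p ∧ ((b : ZMod p) * t).valMinAbs.natAbs < C ∧
      ∀ m : ℕ, 1 ≤ m → m < b → C ≤ ((m : ZMod p) * t).valMinAbs.natAbs := by
  have hex : ∃ b : ℕ, 1 ≤ b ∧ ((b : ZMod p) * t).valMinAbs.natAbs < C :=
    ⟨p, NeZero.one_le, by simpa using hC⟩
  obtain ⟨b, ⟨hb, hbC⟩, hmin⟩ := Nat.findX hex
  have hfar : ∀ m : ℕ, 1 ≤ m → m < b → C ≤ ((m : ZMod p) * t).valMinAbs.natAbs :=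
    fun m hm hmb => not_lt.1 fun h => hmin m hmb ⟨hm, h⟩
  exact ⟨b, hb, mul_le_of_le_natAbs_valMinAbs_mul hCp hfar, hbC, hfar⟩

theorem exists_mul_eq_natCast_of_forall_le_natAbs_valMinAbs [Fact p.Prime] {t : ZMod p} {N : ℕ}
    (hN : 2 ≤ N) (hfar : ∀ m : ℕ, 1 ≤ m → m < N → N ≤ ((m : ZMod p) * t).valMinAbs.natAbs) :
    ∃ u A : ℕ, u ≤ p / N ∧ 1 ≤ A ∧ A ≤ p / N ∧ (u : ZMod p) * t = A := by
  have hp : p.Prime := Fact.out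
  set c := p / N with hc
  have hNc : p < (c + 1) * N := by
    rw [add_mul, one_mul, hc]
    exact Nat.lt_div_mul_add (by omega)
  have hcp : c + 1 ≤ p := by
    have := Nat.div_le_div_left hN (show 0 < 2 by norm_num) (a := p)
    have := Nat.div_lt_self hp.pos (show 1 < 2 by norm_num)
    omega
  have ht : t ≠ 0 := by
    rintro rfl
    have := hfar 1 le_rfl (by omega)
    simp only [mul_zero, valMinAbs_zero, Int.natAbs_zero] at this
    omega
  obtain ⟨b₁, hb₁, hb₁c, hC₁c, hmin₁⟩ := exists_first_return t c.succ_pos hcp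
  have hb₁N : b₁ < N := by nlinarith
  have hNC₁ := hfar b₁ hb₁ hb₁N
  set C₁ := ((b₁ : ZMod p) * t).valMinAbs.natAbs
  rcases le_or_gt 0 ((b₁ : ZMod p) * t).valMinAbs with hpos₁ | hneg₁
  · exact ⟨b₁, C₁, by omega, by omega, by omega,
      (natCast_natAbs_valMinAbs_of_nonneg hpos₁).symm⟩
  obtain ⟨b₂, hb₂, hb₂C₁, hC₂, hmin₂⟩ := exists_first_return t (C := C₁) (by omega) (by omega)
  have hb₂c : b₂ ≤ c := by
    rw [hc, Nat.le_div_iff_mul_le (by omega : 0 < N)]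
    nlinarith
  have hb₂t : (b₂ : ZMod p) * t ≠ 0 := by
    refine mul_ne_zero ?_ ht
    rw [Ne, natCast_eq_zero_iff]
    exact fun h => absurd (Nat.le_of_dvd (by omega) h) (by omega)
  rw [Ne, ← valMinAbs_eq_zero] at hb₂t
  rcases lt_or_gt_of_ne hb₂t with hneg₂ | hpos₂
  · have hb₁₂ : b₁ < b₂ := by
      refine lt_of_le_of_ne (not_lt.1 fun h => ?_) fun h => ?_
      · have := hmin₁ b₂ hb₂ h
        omega
      · subst h
        exact hC₂.false
    have := natAbs_valMinAbs_sub_mul_lt hb₁₂.le hneg₁ hneg₂ hC₂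
    have := hmin₂ (b₂ - b₁) (by omega) (by omega)
    omega
  · exact ⟨b₂, _, hb₂c, by omega, by omega, (natCast_natAbs_valMinAbs_of_nonneg hpos₂.le).symm⟩

lemma lt_natAbs_valMinAbs_mul_of_not_approx [NeZero p] {t : ZMod p} {R : ℝ}
    (hno : ¬ ∃ a b : ℤ, b ≠ 0 ∧ |(a : ℝ)| ≤ R ∧ |(b : ℝ)| ≤ R ∧ (b : ZMod p) * t = a)
    {m : ℕ} (hm : m ≠ 0) (hmR : (m : ℝ) ≤ R) :
    R < ((m : ZMod p) * t).valMinAbs.natAbs := by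
  by_contra! h
  refine hno ⟨((m : ZMod p) * t).valMinAbs, m, by exact_mod_cast hm, ?_, by simpa using hmR, ?_⟩
  · rwa [← Int.cast_abs, Int.abs_eq_natAbs, Int.cast_natCast]
  · rw [coe_valMinAbs, Int.cast_natCast]

lemma exists_mul_eq_mul_add_natCast {t : ZMod p} {K u v A B : ℕ} (hu : u ≤ K) (hv : v ≤ K)
    (hA : (u : ZMod p) * t = A) (hB : (v : ZMod p) * t = -B) (hA1 : 1 ≤ A) (hB1 : 1 ≤ B)
    {ν : ℕ} (hν : ν ≤ K) :
    ∃ ν' ≤ K, ∃ D : ℕ, 1 ≤ D ∧ D ≤ A + B ∧ (ν' : ZMod p) * t = ν * t + D := by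
  by_cases hνu : ν + u ≤ K
  · exact ⟨ν + u, hνu, A, hA1, by omega, by push_cast; linear_combination hA⟩
  by_cases hvν : v ≤ ν
  · refine ⟨ν - v, by omega, B, hB1, by omega, ?_⟩
    push_cast [Nat.cast_sub hvν]
    linear_combination -hB
  · refine ⟨ν + u - v, by omega, A + B, by omega, le_rfl, ?_⟩
    push_cast [Nat.cast_sub (by omega : v ≤ ν + u)]
    linear_combination hA - hB

theorem exists_bracket_of_forall_exists_step [NeZero p] {f : ℕ → ZMod p} {K : ℕ} {L : ℝ}
    (h0 : f 0 = 0) (hstep : ∀ ν ≤ K, ∃ ν' ≤ K, ∃ D : ℕ, 1 ≤ D ∧ (D : ℝ) ≤ L ∧ f ν' = f ν + D) :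
    ∀ x : ℝ, 0 ≤ x → x ≤ p →
      ∃ s₁ s₂ : ℝ,
        s₁ ∈ insert (p : ℝ) {y : ℝ | ∃ ν : ℕ, ν ≤ K ∧ y = ((f ν).val : ℝ)} ∧
        s₂ ∈ insert (p : ℝ) {y : ℝ | ∃ ν : ℕ, ν ≤ K ∧ y = ((f ν).val : ℝ)} ∧
        s₁ ≤ x ∧ x ≤ s₂ ∧ s₂ - s₁ ≤ L := by
  intro x hx0 hxp
  set below := (Finset.range (K + 1)).filter fun ν => ((f ν).val : ℝ) ≤ x
  have h0_mem : 0 ∈ below := by simp [below, h0, hx0]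
  obtain ⟨ν₁, hν₁, hmax⟩ := below.exists_max_image (fun ν => (f ν).val) ⟨0, h0_mem⟩
  simp only [below, Finset.mem_filter, Finset.mem_range] at hν₁ hmax
  obtain ⟨ν₂, hν₂, D, hD1, hDL, hf⟩ := hstep ν₁ (by omega)
  have hmem : ∀ ν ≤ K,
      ((f ν).val : ℝ) ∈ insert (p : ℝ) {y : ℝ | ∃ ν : ℕ, ν ≤ K ∧ y = ((f ν).val : ℝ)} :=
    fun ν hν => Or.inr ⟨ν, hν, rfl⟩
  by_cases hlt : (f ν₁).val + D < p
  · have hval : (f ν₂).val = (f ν₁).val + D := by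
      rw [hf, val_add_of_lt, val_cast_of_lt (by omega)]
      rwa [val_cast_of_lt (by omega)]
    have hx : x < (f ν₂).val := by
      by_contra! hle
      have := hmax ν₂ ⟨by omega, hle⟩
      omega
    refine ⟨_, _, hmem ν₁ (by omega), hmem ν₂ hν₂, hν₁.2, hx.le, ?_⟩
    rw [hval]
    push_cast
    linarith
  · refine ⟨_, p, hmem ν₁ (by omega), Set.mem_insert _ _, hν₁.2, hxp, ?_⟩
    have : (p : ℝ) ≤ (f ν₁).val + D := by exact_mod_cast not_lt.1 hlt
    linarith

end ZMod

open ZMod in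
theorem stmt2_general (p : ℕ) (hp : p.Prime) (t : ZMod p)
    (δ : ℝ) (hδ : 0 < δ)
    (hno : ¬ ∃ a b : ℤ, b ≠ 0 ∧ |(a : ℝ)| ≤ 4 / δ ∧ |(b : ℝ)| ≤ 4 / δ ∧
      (b : ZMod p) * t = (a : ZMod p)) :
    ∀ x : ℝ, 0 ≤ x → x ≤ p →
      ∃ s₁ s₂ : ℝ,
        s₁ ∈ insert (p : ℝ)
          {y : ℝ | ∃ ν : ℕ, ν ≤ ⌊δ * p / 2⌋₊ ∧ y = ((((ν : ZMod p) * t).val : ℕ) : ℝ)} ∧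
        s₂ ∈ insert (p : ℝ)
          {y : ℝ | ∃ ν : ℕ, ν ≤ ⌊δ * p / 2⌋₊ ∧ y = ((((ν : ZMod p) * t).val : ℕ) : ℝ)} ∧
        s₁ ≤ x ∧ x ≤ s₂ ∧ s₂ - s₁ ≤ δ * p / 2 := by
  have := Fact.mk hp
  rcases le_or_gt 2 δ with hδ2 | hδ2
  · intro x hx0 hxp
    exact ⟨0, p, Or.inr ⟨0, Nat.zero_le _, by simp⟩, Set.mem_insert _ _, hx0, hxp, by nlinarith⟩
  set N := ⌊4 / δ⌋₊ + 1
  have hN : 2 ≤ N := by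
    have : 1 ≤ ⌊4 / δ⌋₊ := Nat.le_floor (by rw [Nat.cast_one, le_div_iff₀ hδ]; linarith)
    omega
  have hfar : ∀ m : ℕ, 1 ≤ m → m < N → N ≤ ((m : ZMod p) * t).valMinAbs.natAbs := by
    intro m hm hmN
    have hmR : (m : ℝ) ≤ 4 / δ := (Nat.le_floor_iff (by positivity)).1 (by omega)
    have := (Nat.floor_lt (by positivity)).2
      (lt_natAbs_valMinAbs_mul_of_not_approx hno (by omega) hmR)
    omega
  have hfar_neg : ∀ m : ℕ, 1 ≤ m → m < N → N ≤ ((m : ZMod p) * -t).valMinAbs.natAbs := by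
    simpa only [mul_neg, natAbs_valMinAbs_neg] using hfar
  obtain ⟨u, A, hu, hA1, hA, hut⟩ := exists_mul_eq_natCast_of_forall_le_natAbs_valMinAbs hN hfar
  obtain ⟨v, B, hv, hB1, hB, hvt⟩ :=
    exists_mul_eq_natCast_of_forall_le_natAbs_valMinAbs hN hfar_neg
  have hvt' : (v : ZMod p) * t = -B := by rw [← hvt, mul_neg, neg_neg]
  have hpN : ((p / N : ℕ) : ℝ) ≤ δ * p / 4 := calc
    ((p / N : ℕ) : ℝ) ≤ p / N := Nat.cast_div_le
    _ ≤ p / (4 / δ) := div_le_div_of_nonneg_left (by positivity) (by positivity)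
        (by exact_mod_cast (Nat.lt_floor_add_one (4 / δ)).le)
    _ = δ * p / 4 := by field_simp
  have hK : p / N ≤ ⌊δ * p / 2⌋₊ := Nat.le_floor (by linarith)
  refine exists_bracket_of_forall_exists_step (by simp) fun ν hν => ?_
  obtain ⟨ν', hν', D, hD1, hD, hf⟩ :=
    exists_mul_eq_mul_add_natCast (by omega) (by omega) hut hvt' hA1 hB1 hν
  refine ⟨ν', hν', D, hD1, ?_, hf⟩
  have : (D : ℝ) ≤ 2 * (p / N : ℕ) := by exact_mod_cast (by omega : D ≤ 2 * (p / N))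
  linarith

/-- If t ∈ Z/pZ has no representation t ≡ a/b (mod p) with
0 < |b| ≤ 4/δ and |a| ≤ 4/δ, then the residues {0, t, 2t, ..., ⌊δp/2⌋·t} (mod p),
viewed in {0,...,p-1}, partition [0, p] into subintervals each of length ≤ δp/2. -/
theorem stmt2 (p : ℕ) (hp : p.Prime) (hodd : Odd p) (t : ZMod p)
    (δ : ℝ) (hδ : 0 < δ) (hδp : 2 ≤ δ * p)
    (hno : ¬ ∃ a b : ℤ, b ≠ 0 ∧ |(a : ℝ)| ≤ 4 / δ ∧ |(b : ℝ)| ≤ 4 / δ ∧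
      (b : ZMod p) * t = (a : ZMod p)) :
    ∀ x : ℝ, 0 ≤ x → x ≤ p →
      ∃ s₁ s₂ : ℝ,
        s₁ ∈ insert (p : ℝ)
          {y : ℝ | ∃ ν : ℕ, ν ≤ ⌊δ * p / 2⌋₊ ∧ y = ((((ν : ZMod p) * t).val : ℕ) : ℝ)} ∧
        s₂ ∈ insert (p : ℝ)
          {y : ℝ | ∃ ν : ℕ, ν ≤ ⌊δ * p / 2⌋₊ ∧ y = ((((ν : ZMod p) * t).val : ℕ) : ℝ)} ∧
        s₁ ≤ x ∧ x ≤ s₂ ∧ s₂ - s₁ ≤ δ * p / 2 :=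
  stmt2_general p hp t δ hδ hno
end

section
/- Let B be a sequence over Z/pZ of length at least 3p/2 in which every element has multiplicity at most p/2. Then every element of Z/pZ can be represented as the sum of a subsequence of B of length exactly p. -/
/-!
Let `n = |B|` and `k = n - p`; every multiplicity is at most `k`. Split `B` into `k` nonempty
blocks of pairwise distinct elements. Their sizes minus one add up to `n - k = p`, so by iterated
Cauchy–Davenport the sums obtained by choosing one element from each block cover `ℤ/pℤ`. Choosing
such a transversal `C` with sum `ΣB - y`, the complement `B - C` has `p` elements and sum `y`.
-/

open Multiset Pointwise

namespace Multiset

variable {α : Type*} [DecidableEq α]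

theorem exists_finset_partition_of_count_le {k : ℕ} {B : Multiset α}
    (hcount : ∀ x, B.count x ≤ k) (hk : k ≤ card B) :
    ∃ P : Multiset (Finset α), card P = k ∧ (∀ F ∈ P, F.Nonempty) ∧ (P.map Finset.val).sum = B := by
  induction B using Multiset.induction_on with
  | empty => exact ⟨0, by simp_all, by simp, rfl⟩
  | cons a B ih =>
    rcases lt_or_ge (card B) k with hB | hB
    · refine ⟨(a ::ₘ B).map singleton, ?_, ?_, ?_⟩
      · simp only [card_map, card_cons] at hk ⊢; omega
      · simp
      · simp
    obtain ⟨P, hPcard, hPne, hPsum⟩ :=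
      ih (fun x => (count_le_of_le x (le_cons_self B a)).trans (hcount x)) hB
    -- `a` occurs fewer than `k` times in `B`, so some block of `B` misses it
    obtain ⟨F, hFP, haF⟩ : ∃ F ∈ P, a ∉ F := by
      by_contra! hall
      have hcountB : B.count a = k := by
        rw [← hPsum, count_sum, map_congr rfl fun F hF => count_eq_one_of_mem F.nodup (hall F hF),
          map_const', sum_replicate, smul_eq_mul, mul_one, hPcard]
      have := hcount a
      rw [count_cons_self] at this
      omega
    obtain ⟨P', rfl⟩ := exists_cons_of_mem hFP
    refine ⟨insert a F ::ₘ P', by simpa using hPcard, ?_, ?_⟩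
    · intro G hG
      rcases mem_cons.1 hG with rfl | hG
      · exact Finset.insert_nonempty a F
      · exact hPne G (mem_cons_of_mem hG)
    · rw [map_cons, sum_cons, Finset.insert_val_of_notMem haF, cons_add, ← hPsum, map_cons, sum_cons]

theorem exists_le_card_eq_sum_eq_of_mem_sum [AddCommMonoid α] {P : Multiset (Finset α)} {s : α}
    (hs : s ∈ P.sum) :
    ∃ C ≤ (P.map Finset.val).sum, card C = card P ∧ C.sum = s := by
  induction P using Multiset.induction_on generalizing s with
  | empty => exact ⟨0, le_rfl, rfl, by simp_all⟩
  | cons F P ih =>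
    obtain ⟨a, ha, t, ht, rfl⟩ := Finset.mem_add.1 (by simpa using hs)
    obtain ⟨C, hC, hCcard, hCsum⟩ := ih ht
    refine ⟨a ::ₘ C, ?_, by simp [hCcard], by simp [hCsum]⟩
    rw [map_cons, sum_cons, ← singleton_add]
    exact add_le_add (singleton_le.2 ha) hC

theorem nonempty_sum_of_forall_nonempty [AddCommMonoid α] {P : Multiset (Finset α)}
    (hP : ∀ F ∈ P, F.Nonempty) :
    P.sum.Nonempty := by
  induction P using Multiset.induction_on with
  | empty => exact ⟨0, by simp⟩
  | cons F P ih =>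
    rw [Multiset.sum_cons]
    exact (hP F (mem_cons_self F P)).add (ih fun G hG => hP G (mem_cons_of_mem hG))

end Multiset

namespace ZMod

variable {p : ℕ}

theorem cauchy_davenport_multiset_sum (hp : p.Prime) {P : Multiset (Finset (ZMod p))}
    (hP : ∀ F ∈ P, F.Nonempty) :
    min p ((P.map Finset.card).sum + 1 - Multiset.card P) ≤ P.sum.card := by
  induction P using Multiset.induction_on with
  | empty => simp
  | cons F P ih =>
    have hF := hP F (mem_cons_self F P)
    have hP' : ∀ G ∈ P, G.Nonempty := fun G hG => hP G (mem_cons_of_mem hG)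
    have hcd := cauchy_davenport hp hF (nonempty_sum_of_forall_nonempty hP')
    have := ih hP'
    have := hF.card_pos
    have := (nonempty_sum_of_forall_nonempty hP').card_pos
    simp only [map_cons, Multiset.sum_cons, Multiset.card_cons]
    omega

theorem exists_le_card_eq_sum_eq (hp : p.Prime) {B : Multiset (ZMod p)}
    (hB : ∀ x, B.count x + p ≤ Multiset.card B) (y : ZMod p) :
    ∃ T ≤ B, Multiset.card T = p ∧ T.sum = y := by
  have : NeZero p := ⟨hp.ne_zero⟩
  have hpB := hB 0
  obtain ⟨P, hPcard, hPne, hPsum⟩ :=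
    exists_finset_partition_of_count_le (k := Multiset.card B - p) (B := B)
      (fun x => by have := hB x; omega) (by omega)
  have hPcards : (P.map Finset.card).sum = Multiset.card B := by
    rw [← hPsum, ← cardHom_apply, map_multiset_sum, map_map]; rfl
  -- the block sizes exceed one by `p` in total
  have hPsum_univ : P.sum = Finset.univ := by
    have hcd := cauchy_davenport_multiset_sum hp hPne
    rw [hPcards, hPcard] at hcd
    refine Finset.eq_univ_of_card _ (le_antisymm (Finset.card_le_univ _) ?_)
    rw [ZMod.card]
    omega
  obtain ⟨C, hCB, hCcard, hCsum⟩ :=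
    exists_le_card_eq_sum_eq_of_mem_sum (hPsum_univ ▸ Finset.mem_univ (B.sum - y))
  rw [hPsum] at hCB
  refine ⟨B - C, tsub_le_self, by rw [card_sub hCB]; omega, ?_⟩
  have := congrArg Multiset.sum (tsub_add_cancel_of_le hCB)
  rw [sum_add, hCsum] at this
  linear_combination this

end ZMod

/-- For all sufficiently large primes p: if B is a sequence over Z/pZ of
length at least 3p/2 in which every element has multiplicity at most p/2, then every
element of Z/pZ is the sum of a subsequence of B of length exactly p. -/
theorem stmt3 :
    ∃ p0 : ℕ, ∀ p : ℕ, p.Prime → p > p0 →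
      ∀ B : Multiset (ZMod p), 3 * p ≤ 2 * Multiset.card B →
        (∀ x : ZMod p, 2 * B.count x ≤ p) →
        ∀ y : ZMod p, ∃ T : Multiset (ZMod p), T ≤ B ∧ Multiset.card T = p ∧ T.sum = y :=
  ⟨0, fun _ hp _ B hcard hcount y =>
    ZMod.exists_le_card_eq_sum_eq hp (fun x => by have := hcount x; omega) y⟩
end

section
/- Let A be a real sequence over Z² with total length 3.99, maximal multiplicity ≤ 1/2, no line of multiplicity > 3/2, satisfying the replacement-closure property of Lemma DReplace, and suppose Σ¹_R(A) has no interior lattice point. Then there exist three affinely independent points of A each having multiplicity exactly 1/2. -/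
/-!
If two support points `u ≠ v` have a lattice midpoint `m`, then `μ(m) = 1/2`. Otherwise the
replacement property, applied to `m` in a triangle `u v p` with `p` off the line `uv`, gives a
line `L` through `m` of multiplicity exactly `3/2` avoiding `u` and `v`. Along a
primitive lattice direction of `L`, the lowest and the highest sub-weights of mass `1` on `L` have
barycentres at least one lattice step apart (weights are at most `1/2`), so an integer lies strictly
between them even after mass `β` is traded for `β/2` at `u` and `β/2` at `v`; moving mass between
`u` and `v` then makes the corresponding lattice point of `L` an interior point of `Σ¹_R(A)`.

So support points of equal parity have a half point as midpoint. If the half points were all on a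
line `ℓ` through two of them, a closest pair of half points has distinct parities; a parity class
containing a half point then has no support point off `ℓ`, and any other class at most one on each
side of `ℓ`. The length would be at most `3/2 + 4 · 1/2 < 3.99`. With at most one half point every
class holds at most two support points and the class of the half point only one: at most seven
points, of length at most `7/2`.
-/

open scoped Classical

noncomputable section

def toR2 (a : ℤ × ℤ) : ℝ × ℝ := ((a.1 : ℝ), (a.2 : ℝ))

def sigmaR (lam : ℝ) (A : (ℤ × ℤ) →₀ ℝ) : Set (ℝ × ℝ) :=
  { x | ∃ t : (ℤ × ℤ) → ℝ, (∀ a, 0 ≤ t a ∧ t a ≤ A a) ∧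
      (∑ a ∈ A.support, t a) = lam ∧ (∑ a ∈ A.support, t a • toR2 a) = x }

def lineMult (A : (ℤ × ℤ) →₀ ℝ) (q w : ℝ × ℝ) : ℝ :=
  ∑ a ∈ A.support, if ∃ r : ℝ, toR2 a = q + r • w then A a else 0

/-- The replacement-closure property of Lemma DReplace: whenever v₁, v₂, v₃, v are
distinct lattice points with μ(v₁), μ(v₂), μ(v₃) positive and v lies in the triangle
v₁v₂v₃, either μ(v) = 1/2 or v lies on a line of multiplicity 3/2 which is not the
line supporting a side of the triangle containing v. -/
def ReplacementClosed (A : (ℤ × ℤ) →₀ ℝ) : Prop :=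
  ∀ v₁ v₂ v₃ v : ℤ × ℤ, v₁ ≠ v₂ → v₁ ≠ v₃ → v₂ ≠ v₃ →
    v ≠ v₁ → v ≠ v₂ → v ≠ v₃ →
    0 < A v₁ → 0 < A v₂ → 0 < A v₃ →
    toR2 v ∈ convexHull ℝ {toR2 v₁, toR2 v₂, toR2 v₃} →
    A v = 1 / 2 ∨
      ∃ q w : ℝ × ℝ, w ≠ 0 ∧ (∃ r : ℝ, toR2 v = q + r • w) ∧
        lineMult A q w = 3 / 2 ∧
        ∀ x y : ℤ × ℤ, x ∈ ({v₁, v₂, v₃} : Set (ℤ × ℤ)) →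
          y ∈ ({v₁, v₂, v₃} : Set (ℤ × ℤ)) → x ≠ y →
          toR2 v ∈ segment ℝ (toR2 x) (toR2 y) →
          ¬ ((∃ r : ℝ, toR2 x = q + r • w) ∧ (∃ r : ℝ, toR2 y = q + r • w))

lemma toR2_add (a b : ℤ × ℤ) : toR2 (a + b) = toR2 a + toR2 b := by
  simp [toR2]

lemma toR2_sub (a b : ℤ × ℤ) : toR2 (a - b) = toR2 a - toR2 b := by
  simp [toR2]

lemma toR2_zsmul (k : ℤ) (a : ℤ × ℤ) : toR2 (k • a) = (k : ℝ) • toR2 a := by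
  simp [toR2]

lemma toR2_injective : Function.Injective toR2 := fun a b h => by
  simp only [toR2, Prod.ext_iff, Int.cast_inj] at h
  exact Prod.ext h.1 h.2

def cross (a b : ℝ × ℝ) : ℝ := a.1 * b.2 - a.2 * b.1

lemma cross_eq_zero_iff {w : ℝ × ℝ} (hw : w ≠ 0) (p : ℝ × ℝ) :
    cross w p = 0 ↔ ∃ r : ℝ, p = r • w := by
  refine ⟨fun h => ?_, fun ⟨r, hr⟩ => by rw [hr]; simp [cross]; ring⟩
  unfold cross at h
  rcases ne_or_eq w.1 0 with h1 | h1
  · refine ⟨p.1 / w.1, Prod.ext ?_ ?_⟩ <;> simp only [Prod.smul_fst, Prod.smul_snd, smul_eq_mul]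
    · field_simp
    · field_simp; linarith
  · have h2 : w.2 ≠ 0 := fun h2 => hw (Prod.ext h1 h2)
    refine ⟨p.2 / w.2, Prod.ext ?_ ?_⟩ <;> simp only [Prod.smul_fst, Prod.smul_snd, smul_eq_mul]
    · rw [h1, zero_mul, zero_sub, neg_eq_zero, mul_eq_zero, or_iff_right h2] at h
      rw [h1, mul_zero, h]
    · field_simp

lemma exists_eq_add_smul_iff {w : ℝ × ℝ} (hw : w ≠ 0) (q p : ℝ × ℝ) :
    (∃ r : ℝ, p = q + r • w) ↔ cross w (p - q) = 0 := by
  simp only [cross_eq_zero_iff hw, sub_eq_iff_eq_add']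

lemma cross_sub_eq_zero_of_collinear {P Q R : ℝ × ℝ} (h : Collinear ℝ {P, Q, R}) :
    cross (Q - P) (R - P) = 0 := by
  obtain ⟨v, hv⟩ := (collinear_iff_of_mem (Set.mem_insert P _)).mp h
  obtain ⟨a, ha⟩ := hv Q (by simp)
  obtain ⟨b, hb⟩ := hv R (by simp)
  rw [vadd_eq_add] at ha hb
  rw [ha, hb, add_sub_cancel_right, add_sub_cancel_right]
  simp [cross]; ring

lemma add_smul_mem_interior {K : Set (ℝ × ℝ)} (hK : Convex ℝ K) {P D H : ℝ × ℝ}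
    (hDH : cross D H ≠ 0) {a b c x : ℝ} (hax : a < x) (hxb : x < b) (hc : 0 < c)
    (ha : ∀ γ, |γ| ≤ c → P + a • D + γ • H ∈ K) (hb : ∀ γ, |γ| ≤ c → P + b • D + γ • H ∈ K) :
    P + x • D ∈ interior K := by
  -- coordinates with respect to the basis `D, H`, by Cramer's rule
  let f : ℝ × ℝ → ℝ × ℝ := fun p => (cross (p - P) H / cross D H, cross D (p - P) / cross D H)
  have hf : ∀ p, p = P + (f p).1 • D + (f p).2 • H := by
    intro p
    have key : cross D H • (p - P) = cross (p - P) H • D + cross D (p - P) • H := by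
      ext <;> simp [cross] <;> ring
    calc p = P + (cross D H)⁻¹ • (cross D H • (p - P)) := by
          rw [smul_smul, inv_mul_cancel₀ hDH, one_smul, add_sub_cancel]
      _ = _ := by rw [key, smul_add, smul_smul, smul_smul, add_assoc]; simp only [f, div_eq_inv_mul]
  have hfcont : Continuous f := by
    simp only [f, cross]; fun_prop
  refine mem_interior.mpr ⟨f ⁻¹' (Set.Ioo a b ×ˢ Set.Ioo (-c) c), ?_,
    (isOpen_Ioo.prod isOpen_Ioo).preimage hfcont, ?_⟩
  · rintro p ⟨⟨h1, h2⟩, h3, h4⟩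
    set s := (f p).1
    set γ := (f p).2
    have hγ : |γ| ≤ c := abs_le.mpr ⟨h3.le, h4.le⟩
    have hab : 0 < b - a := by linarith
    have hmem := hK.add_smul_mem (ha γ hγ) (y := (b - a) • D) (by convert hb γ hγ using 1; module)
      (t := (s - a) / (b - a)) ⟨div_nonneg (by linarith) hab.le, (div_le_one hab).mpr (by linarith)⟩
    convert hmem using 1
    rw [hf p, smul_smul, div_mul_cancel₀ _ hab.ne']
    module
  · have hfx : f (P + x • D) = (x, 0) := by
      have h1 : cross (x • D) H = x * cross D H := by simp [cross]; ring
      have h2 : cross D (x • D) = 0 := by simp [cross]; ring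
      simp only [f, add_sub_cancel_left, h1, h2, mul_div_cancel_right₀ _ hDH, zero_div]
    rw [Set.mem_preimage, hfx]
    exact ⟨⟨hax, hxb⟩, neg_lt_zero.mpr hc, hc⟩

lemma convex_sigmaR (lam : ℝ) (A : (ℤ × ℤ) →₀ ℝ) : Convex ℝ (sigmaR lam A) := by
  rintro _ ⟨t₁, ht₁, hs₁, rfl⟩ _ ⟨t₂, ht₂, hs₂, rfl⟩ a b ha hb hab
  refine ⟨fun p => a * t₁ p + b * t₂ p, fun p => ⟨?_, ?_⟩, ?_, ?_⟩
  · nlinarith [(ht₁ p).1, (ht₂ p).1]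
  · have h := add_le_add (mul_le_mul_of_nonneg_left (ht₁ p).2 ha)
      (mul_le_mul_of_nonneg_left (ht₂ p).2 hb)
    rwa [← add_mul, hab, one_mul] at h
  · rw [Finset.sum_add_distrib, ← Finset.mul_sum, ← Finset.mul_sum, hs₁, hs₂, ← add_mul, hab,
      one_mul]
  · simp only [add_smul, mul_smul, Finset.sum_add_distrib, ← Finset.smul_sum]

open Filter Topology

namespace LineWeight

variable (S : Finset ℤ) (w : ℤ → ℝ)

def IsSubweight (s : ℤ → ℝ) : Prop := ∀ k ∈ S, 0 ≤ s k ∧ s k ≤ w k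

def moment (s : ℤ → ℝ) : ℝ := ∑ k ∈ S, s k * k

lemma moment_sub (s t : ℤ → ℝ) : moment S (s - t) = moment S s - moment S t := by
  simp only [moment, Pi.sub_apply, sub_mul, Finset.sum_sub_distrib]

-- The lowest mass `M` of `w`: each point keeps what is left of `M` after the points below it.
def lowerPart (M : ℝ) (k : ℤ) : ℝ := min (w k) (max 0 (M - ∑ j ∈ S with j < k, w j))

variable {S w}

lemma lowerPart_nonneg {M : ℝ} {k : ℤ} (hk : 0 ≤ w k) : 0 ≤ lowerPart S w M k :=
  le_min hk (le_max_left _ _)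

lemma lowerPart_le (M : ℝ) (k : ℤ) : lowerPart S w M k ≤ w k := min_le_left _ _

lemma lowerPart_mono {M M' : ℝ} (h : M ≤ M') (k : ℤ) : lowerPart S w M k ≤ lowerPart S w M' k :=
  min_le_min_left _ (max_le_max_left _ (by linarith))

lemma sum_lowerPart (hw : ∀ k ∈ S, 0 ≤ w k) {M : ℝ} (hM : 0 ≤ M) :
    ∑ k ∈ S, lowerPart S w M k = min M (∑ k ∈ S, w k) := by
  induction S using Finset.induction_on_max with
  | empty => simpa using hM
  | insert a s hlt ih =>
    have has : a ∉ s := fun h => lt_irrefl a (hlt a h)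
    have hbelow : ∀ k ∈ s, lowerPart (insert a s) w M k = lowerPart s w M k := by
      intro k hk
      simp only [lowerPart, Finset.filter_insert, if_neg (hlt k hk).not_gt]
    have htop : lowerPart (insert a s) w M a = min (w a) (max 0 (M - ∑ k ∈ s, w k)) := by
      simp only [lowerPart, Finset.filter_insert, lt_irrefl, if_false,
        Finset.filter_true_of_mem hlt]
    rw [Finset.sum_insert has, Finset.sum_insert has, Finset.sum_congr rfl hbelow, htop,
      ih fun k hk => hw k (Finset.mem_insert_of_mem hk)]
    have hwa := hw a (Finset.mem_insert_self a s)
    have hs := Finset.sum_nonneg fun k hk => hw k (Finset.mem_insert_of_mem hk)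
    simp only [min_def, max_def]
    split_ifs <;> linarith

lemma le_of_lowerPart_ne_zero (hw : ∀ k ∈ S, 0 ≤ w k) {M : ℝ} {k k' : ℤ} (hk : k ∈ S)
    (hk' : k' ∈ S) (h : lowerPart S w M k ≠ 0) (h' : lowerPart S w M k' ≠ w k') : k ≤ k' := by
  by_contra! hlt
  have hbelow : M - ∑ j ∈ S with j < k, w j > 0 := by
    by_contra! hle
    exact h (by simp [lowerPart, max_eq_left hle, min_eq_right (hw k hk)])
  have habove : M - ∑ j ∈ S with j < k', w j < w k' := by
    by_contra! hle
    exact h' (min_eq_left (le_max_of_le_right hle))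
  have hsub : insert k' {j ∈ S | j < k'} ⊆ {j ∈ S | j < k} := by
    intro j hj
    simp only [Finset.mem_insert, Finset.mem_filter] at hj ⊢
    rcases hj with rfl | ⟨hj, hjk⟩
    · exact ⟨hk', hlt⟩
    · exact ⟨hj, hjk.trans hlt⟩
  have hmono := Finset.sum_le_sum_of_subset_of_nonneg hsub
    fun j hj _ => hw j (Finset.mem_filter.mp hj).1
  rw [Finset.sum_insert (by simp)] at hmono
  linarith

lemma add_half_le_moment {X Y : ℤ → ℝ} (hX : ∀ k ∈ S, 0 ≤ X k) (hY : ∀ k ∈ S, 0 ≤ Y k)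
    (hXY : ∀ k ∈ S, X k + Y k ≤ 1 / 2)
    (hsep : ∀ k ∈ S, ∀ k' ∈ S, X k ≠ 0 → Y k' ≠ 0 → k ≤ k')
    (hXs : ∑ k ∈ S, X k = 1 / 2) (hYs : ∑ k ∈ S, Y k = 1 / 2) :
    moment S X + 1 / 2 ≤ moment S Y := by
  obtain ⟨a, ha, hXa, hamax⟩ : ∃ a ∈ S, X a ≠ 0 ∧ ∀ k ∈ S, X k ≠ 0 → k ≤ a := by
    have hne : ({k ∈ S | X k ≠ 0} : Finset ℤ).Nonempty := by
      obtain ⟨k, hk, hXk⟩ := Finset.exists_ne_zero_of_sum_ne_zero (by rw [hXs]; norm_num)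
      exact ⟨k, Finset.mem_filter.mpr ⟨hk, hXk⟩⟩
    obtain ⟨ha, hXa⟩ := Finset.mem_filter.mp (Finset.max'_mem _ hne)
    exact ⟨_, ha, hXa, fun k hk hXk => Finset.le_max' _ k (Finset.mem_filter.mpr ⟨hk, hXk⟩)⟩
  have hXk : ∀ k ∈ S, X k * k ≤ X k * (a - 1) + if k = a then X k else 0 := by
    intro k hk
    split_ifs with hka
    · subst hka; linarith [hX k hk]
    · rcases eq_or_ne (X k) 0 with h0 | h0
      · simp [h0]
      · have : (k : ℝ) ≤ a - 1 := by
          exact_mod_cast Int.le_sub_one_of_lt (lt_of_le_of_ne (hamax k hk h0) hka)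
        nlinarith [hX k hk]
  have hYk : ∀ k ∈ S, Y k * (a + 1) ≤ Y k * k + if k = a then Y k else 0 := by
    intro k hk
    split_ifs with hka
    · subst hka; linarith [hY k hk]
    · rcases eq_or_ne (Y k) 0 with h0 | h0
      · simp [h0]
      · have : (a : ℝ) + 1 ≤ k := by
          exact_mod_cast Int.add_one_le_of_lt (lt_of_le_of_ne (hsep a ha k hk hXa h0) (Ne.symm hka))
        nlinarith [hY k hk]
  have h1 := Finset.sum_le_sum hXk
  have h2 := Finset.sum_le_sum hYk
  simp only [Finset.sum_add_distrib, ← Finset.sum_mul, Finset.sum_ite_eq', if_pos ha] at h1 h2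
  have := hXY a ha
  rw [hXs] at h1
  rw [hYs] at h2
  unfold moment
  linarith

theorem exists_moment_add_one_le (hw0 : ∀ k ∈ S, 0 ≤ w k) (hw : ∀ k ∈ S, w k ≤ 1 / 2)
    (hsum : ∑ k ∈ S, w k = 3 / 2) :
    ∃ s t, IsSubweight S w s ∧ IsSubweight S w t ∧ ∑ k ∈ S, s k = 1 ∧ ∑ k ∈ S, t k = 1 ∧
      moment S s + 1 ≤ moment S t := by
  -- `X`, `B - X` and `w - B` are the lowest, middle and highest halves of `w`
  set X := lowerPart S w (1 / 2)
  set B := lowerPart S w 1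
  have hX0 : ∀ k ∈ S, 0 ≤ X k := fun k hk => lowerPart_nonneg (hw0 k hk)
  have hXB : ∀ k, X k ≤ B k := lowerPart_mono (by norm_num)
  have hBw : ∀ k, B k ≤ w k := lowerPart_le 1
  have hXs : ∑ k ∈ S, X k = 1 / 2 := by
    rw [sum_lowerPart hw0 (by norm_num), hsum]; norm_num
  have hBs : ∑ k ∈ S, B k = 1 := by
    rw [sum_lowerPart hw0 (by norm_num), hsum]; norm_num
  have hXY := add_half_le_moment (Y := B - X) hX0 (fun k _ => sub_nonneg.mpr (hXB k))
    (fun k hk => by simp only [Pi.sub_apply]; linarith [hBw k, hw k hk])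
    (fun k hk k' hk' hXk hYk' => le_of_lowerPart_ne_zero hw0 hk hk' hXk fun h =>
      hYk' (by simp only [Pi.sub_apply]; linarith [hXB k', hBw k']))
    hXs (by simp only [Pi.sub_apply, Finset.sum_sub_distrib, hBs, hXs]; norm_num)
  have hYZ := add_half_le_moment (X := B - X) (Y := w - B) (fun k _ => sub_nonneg.mpr (hXB k))
    (fun k _ => sub_nonneg.mpr (hBw k))
    (fun k hk => by simp only [Pi.sub_apply]; linarith [hX0 k hk, hw k hk])
    (fun k hk k' hk' hYk hZk' => le_of_lowerPart_ne_zero hw0 hk hk'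
      (fun h => hYk (by simp only [Pi.sub_apply]; linarith [hX0 k hk, hXB k]))
      (fun h => hZk' (by simp only [Pi.sub_apply]; linarith)))
    (by simp only [Pi.sub_apply, Finset.sum_sub_distrib, hBs, hXs]; norm_num)
    (by simp only [Pi.sub_apply, Finset.sum_sub_distrib, hBs, hsum]; norm_num)
  refine ⟨B, w - X, fun k hk => ⟨hX0 k hk |>.trans (hXB k), hBw k⟩,
    fun k hk => ⟨sub_nonneg.mpr ((hXB k).trans (hBw k)),
      by simp only [Pi.sub_apply]; linarith [hX0 k hk]⟩,
    hBs, by simp only [Pi.sub_apply, Finset.sum_sub_distrib, hsum, hXs]; norm_num, ?_⟩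
  simp only [moment_sub] at hXY hYZ ⊢
  linarith

lemma exists_pos_ne {s : ℤ → ℝ} (hs : IsSubweight S w s) (hw : ∀ k ∈ S, w k ≤ 1 / 2)
    (h1 : ∑ k ∈ S, s k = 1) (c : ℤ) : ∃ k ∈ S, 0 < s k ∧ k ≠ c := by
  by_contra! h
  have hzero : ∀ k ∈ S, k ≠ c → s k = 0 := fun k hk hkc =>
    le_antisymm (not_lt.mp fun hpos => hkc (h k hk hpos)) (hs k hk).1
  by_cases hc : c ∈ S
  · rw [Finset.sum_eq_single_of_mem c hc hzero] at h1
    linarith [(hs c hc).2, hw c hc]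
  · rw [Finset.sum_eq_zero fun k hk => hzero k hk (ne_of_mem_of_not_mem hk hc)] at h1
    norm_num at h1

lemma exists_pos_gt_of_le_moment {s : ℤ → ℝ} (hs : IsSubweight S w s) (hw : ∀ k ∈ S, w k ≤ 1 / 2)
    (h1 : ∑ k ∈ S, s k = 1) {c : ℤ} (hc : (c : ℝ) ≤ moment S s) : ∃ k ∈ S, c < k ∧ 0 < s k := by
  by_contra! h
  obtain ⟨k₀, hk₀, hpos, hne⟩ := exists_pos_ne hs hw h1 c
  have hlt : k₀ < c := lt_of_le_of_ne (not_lt.mp fun hgt => (h k₀ hk₀ hgt).not_gt hpos) hne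
  have : 0 < ∑ k ∈ S, s k * (c - k) := by
    refine Finset.sum_pos' (fun k hk => ?_)
      ⟨k₀, hk₀, mul_pos hpos (by exact_mod_cast sub_pos.mpr hlt)⟩
    rcases le_or_gt k c with hkc | hkc
    · exact mul_nonneg (hs k hk).1 (by exact_mod_cast sub_nonneg.mpr hkc)
    · simp [le_antisymm (h k hk hkc) (hs k hk).1]
  simp only [mul_sub, Finset.sum_sub_distrib, ← Finset.sum_mul, h1] at this
  unfold moment at hc
  linarith

lemma exists_pos_lt_of_moment_le {s : ℤ → ℝ} (hs : IsSubweight S w s) (hw : ∀ k ∈ S, w k ≤ 1 / 2)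
    (h1 : ∑ k ∈ S, s k = 1) {c : ℤ} (hc : moment S s ≤ c) : ∃ k ∈ S, k < c ∧ 0 < s k := by
  by_contra! h
  obtain ⟨k₀, hk₀, hpos, hne⟩ := exists_pos_ne hs hw h1 c
  have hlt : c < k₀ := lt_of_le_of_ne (not_lt.mp fun hgt => (h k₀ hk₀ hgt).not_gt hpos) hne.symm
  have : 0 < ∑ k ∈ S, s k * (k - c) := by
    refine Finset.sum_pos' (fun k hk => ?_)
      ⟨k₀, hk₀, mul_pos hpos (by exact_mod_cast sub_pos.mpr hlt)⟩
    rcases le_or_gt c k with hkc | hkc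
    · exact mul_nonneg (hs k hk).1 (by exact_mod_cast sub_nonneg.mpr hkc)
    · simp [le_antisymm (h k hk hkc) (hs k hk).1]
  simp only [mul_sub, Finset.sum_sub_distrib, ← Finset.sum_mul, h1] at this
  unfold moment at hc
  linarith

lemma eventually_exists_sub_single {s : ℤ → ℝ} (hs : IsSubweight S w s) {k : ℤ} (hk : k ∈ S)
    (hpos : 0 < s k) : ∀ᶠ β in 𝓝[>] (0 : ℝ), ∃ s', IsSubweight S w s' ∧
      ∑ j ∈ S, s' j = ∑ j ∈ S, s j - β ∧ moment S s' = moment S s - β * k := by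
  filter_upwards [Ioo_mem_nhdsGT hpos] with β hβ
  refine ⟨s - Pi.single k β, fun j hj => ?_, ?_, ?_⟩
  · rcases eq_or_ne j k with rfl | hjk
    · simp only [Pi.sub_apply, Pi.single_eq_same]
      constructor <;> linarith [hβ.1, hβ.2, (hs j hj).2]
    · simpa [Pi.single_eq_of_ne hjk] using hs j hj
  · simp [Finset.sum_sub_distrib, Finset.sum_pi_single', hk]
  · simp [moment, sub_mul, Finset.sum_sub_distrib, Pi.single_apply, hk]

lemma eventually_sub_mul_lt {a x c : ℝ} (h : a < x ∨ (a ≤ x ∧ 0 < c)) :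
    ∀ᶠ β in 𝓝[>] (0 : ℝ), a - β * c < x := by
  rcases h with h | ⟨h, hc⟩
  · have hcont : Tendsto (fun β : ℝ => a - β * c) (𝓝[>] 0) (𝓝 (a - 0 * c)) :=
      ((continuous_const.sub (continuous_id.mul continuous_const)).tendsto 0).mono_left
        nhdsWithin_le_nhds
    exact hcont.eventually_lt_const (by simpa using h)
  · filter_upwards [self_mem_nhdsWithin] with β (hβ : 0 < β)
    nlinarith

lemma eventually_lt_sub_mul {a x c : ℝ} (h : x < a ∨ (x ≤ a ∧ c < 0)) :
    ∀ᶠ β in 𝓝[>] (0 : ℝ), x < a - β * c := by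
  have h' : -a < -x ∨ (-a ≤ -x ∧ 0 < -c) := by
    rcases h with h | ⟨h, hc⟩
    · exact Or.inl (by linarith)
    · exact Or.inr ⟨by linarith, by linarith⟩
  filter_upwards [eventually_sub_mul_lt h'] with β hβ
  linarith

theorem exists_int_strictly_between_moments (hw0 : ∀ k ∈ S, 0 ≤ w k)
    (hw : ∀ k ∈ S, w k ≤ 1 / 2) (hsum : ∑ k ∈ S, w k = 3 / 2) :
    ∃ x : ℤ, ∀ᶠ β in 𝓝[>] (0 : ℝ),
      (∃ s, IsSubweight S w s ∧ ∑ k ∈ S, s k = 1 - β ∧ moment S s < x) ∧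
      (∃ s, IsSubweight S w s ∧ ∑ k ∈ S, s k = 1 - β ∧ x < moment S s) := by
  obtain ⟨s, t, hs, ht, hs1, ht1, hst⟩ := exists_moment_add_one_le hw0 hw hsum
  suffices ∃ x : ℤ, ∃ k ∈ S, ∃ l ∈ S, 0 < s k ∧ 0 < t l ∧
      (moment S s < x ∨ (moment S s ≤ x ∧ (0 : ℝ) < k)) ∧
      (x < moment S t ∨ (x ≤ moment S t ∧ (l : ℝ) < 0)) by
    obtain ⟨x, k, hk, l, hl, hsk, htl, hlo, hhi⟩ := this
    refine ⟨x, ?_⟩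
    filter_upwards [eventually_exists_sub_single hs hk hsk, eventually_exists_sub_single ht hl htl,
      eventually_sub_mul_lt hlo, eventually_lt_sub_mul hhi]
      with β ⟨s', hs', hs's, hs'm⟩ ⟨t', ht', ht's, ht'm⟩ hlt hgt
    exact ⟨⟨s', hs', by rw [hs's, hs1], hs'm ▸ hlt⟩, ⟨t', ht', by rw [ht's, ht1], ht'm ▸ hgt⟩⟩
  obtain ⟨k, hk, hsk, -⟩ := exists_pos_ne hs hw hs1 0
  obtain ⟨l, hl, htl, -⟩ := exists_pos_ne ht hw ht1 0
  by_cases hgap : ∃ x : ℤ, moment S s < x ∧ (x : ℝ) < moment S t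
  · obtain ⟨x, h1, h2⟩ := hgap
    exact ⟨x, k, hk, l, hl, hsk, htl, Or.inl h1, Or.inl h2⟩
  push Not at hgap
  -- otherwise both moments are integers, `n` and `n + 1`
  set n := ⌊moment S s⌋
  have hn := hgap (n + 1) (by push_cast; exact Int.lt_floor_add_one _)
  push_cast at hn
  have hsn : moment S s = n := by linarith [Int.floor_le (moment S s)]
  rcases le_or_gt 0 n with hn0 | hn0
  · obtain ⟨k', hk', hk'0, hsk'⟩ := exists_pos_gt_of_le_moment hs hw hs1 (c := 0)
      (by rw [hsn]; exact_mod_cast hn0)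
    exact ⟨n, k', hk', l, hl, hsk', htl, Or.inr ⟨hsn.le, by exact_mod_cast hk'0⟩,
      Or.inl (by linarith)⟩
  · obtain ⟨l', hl', hl'0, htl'⟩ := exists_pos_lt_of_moment_le ht hw ht1 (c := 0)
      (by push_cast; linarith [show (n : ℝ) + 1 ≤ 0 by exact_mod_cast hn0])
    exact ⟨n + 1, k, hk, l', hl', hsk, htl', Or.inl (by push_cast; linarith),
      Or.inr ⟨by push_cast; linarith, by exact_mod_cast hl'0⟩⟩

end LineWeight

lemma eq_of_add_self_eq_add_self {a b : ℤ × ℤ} (h : a + a = b + b) : a = b := by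
  have h1 := congrArg Prod.fst h
  have h2 := congrArg Prod.snd h
  simp only [Prod.fst_add, Prod.snd_add] at h1 h2
  exact Prod.ext (by omega) (by omega)

lemma cross_sub_of_add_eq {u v m : ℤ × ℤ} (h : u + v = m + m) (D : ℝ × ℝ) :
    cross D (toR2 u - toR2 v) = 2 * cross D (toR2 u - toR2 m) := by
  have h' := congrArg toR2 h
  rw [toR2_add, toR2_add] at h'
  rw [show toR2 v = toR2 m + toR2 m - toR2 u by rw [← h']; abel]
  simp [cross]; ring

lemma cross_add_cross_of_add_eq {a b m : ℤ × ℤ} (h : a + b = m + m) (W P : ℝ × ℝ) :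
    cross W (toR2 a - P) + cross W (toR2 b - P) = 2 * cross W (toR2 m - P) := by
  have h' := congrArg toR2 h
  rw [toR2_add, toR2_add] at h'
  rw [show toR2 b = toR2 m + toR2 m - toR2 a by rw [← h']; abel]
  simp [cross]; ring

lemma exists_primitive (e : ℤ × ℤ) (he : e ≠ 0) :
    ∃ (d : ℤ × ℤ) (g : ℤ), 0 < g ∧ e = g • d ∧ Int.gcd d.1 d.2 = 1 := by
  have hg : 0 < Int.gcd e.1 e.2 := Int.gcd_pos_iff.mpr
    (by by_contra! h; exact he (Prod.ext h.1 h.2))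
  refine ⟨(e.1 / Int.gcd e.1 e.2, e.2 / Int.gcd e.1 e.2), Int.gcd e.1 e.2, by exact_mod_cast hg,
    Prod.ext ?_ ?_, Int.gcd_div_gcd_div_gcd hg⟩
  · exact (Int.mul_ediv_cancel' (Int.gcd_dvd_left _ _)).symm
  · exact (Int.mul_ediv_cancel' (Int.gcd_dvd_right _ _)).symm

lemma exists_eq_zsmul_of_gcd_eq_one {d e : ℤ × ℤ} (hd : Int.gcd d.1 d.2 = 1)
    (h : d.1 * e.2 = d.2 * e.1) : ∃ k : ℤ, e = k • d := by
  have hbez := Int.gcd_eq_gcd_ab d.1 d.2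
  rw [hd, Nat.cast_one] at hbez
  refine ⟨e.1 * Int.gcdA d.1 d.2 + e.2 * Int.gcdB d.1 d.2, Prod.ext ?_ ?_⟩ <;>
    simp only [Prod.smul_fst, Prod.smul_snd, smul_eq_mul]
  · linear_combination e.1 * hbez - Int.gcdB d.1 d.2 * h
  · linear_combination e.2 * hbez + Int.gcdA d.1 d.2 * h

lemma exists_lattice_direction {q w : ℝ × ℝ} (hw : w ≠ 0) {m a₁ a₂ : ℤ × ℤ}
    (hm : ∃ r : ℝ, toR2 m = q + r • w) (h₁ : ∃ r : ℝ, toR2 a₁ = q + r • w)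
    (h₂ : ∃ r : ℝ, toR2 a₂ = q + r • w) (h₁₂ : a₁ ≠ a₂) :
    ∃ d : ℤ × ℤ, (∀ a, (∃ r : ℝ, toR2 a = q + r • w) → ∃ k : ℤ, a = m + k • d) ∧
      ∀ p, (∃ r : ℝ, p = q + r • w) ↔ cross (toR2 d) (p - toR2 m) = 0 := by
  obtain ⟨d, g, hg, he, hd⟩ := exists_primitive (a₂ - a₁) (sub_ne_zero.mpr h₁₂.symm)
  obtain ⟨rm, hrm⟩ := hm
  obtain ⟨r₁, hr₁⟩ := h₁
  obtain ⟨r₂, hr₂⟩ := h₂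
  have hD : toR2 d ≠ 0 := fun h0 => by
    have : d = 0 := toR2_injective (by simpa [toR2] using h0)
    simp [this] at hd
  have hgD : (g : ℝ) • toR2 d = (r₂ - r₁) • w := by
    rw [← toR2_zsmul, ← he, toR2_sub, hr₁, hr₂]; module
  obtain ⟨c, hc⟩ : ∃ c : ℝ, toR2 d = c • w := by
    refine ⟨(r₂ - r₁) / g, ?_⟩
    rw [div_eq_inv_mul, mul_smul, ← hgD, smul_smul, inv_mul_cancel₀ (by positivity), one_smul]
  have hc0 : c ≠ 0 := by rintro rfl; exact hD (by simpa using hc)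
  have hline : ∀ p, (∃ r : ℝ, p = q + r • w) ↔ cross (toR2 d) (p - toR2 m) = 0 := fun p => by
    have hcross : cross (toR2 d) (p - toR2 m) = c * cross w (p - q) := by
      rw [hc, hrm]; simp [cross]; ring
    rw [exists_eq_add_smul_iff hw, hcross, mul_eq_zero, or_iff_right hc0]
  refine ⟨d, fun a ha => ?_, hline⟩
  have h0 := (hline _).mp ha
  simp only [cross, toR2, Prod.fst_sub, Prod.snd_sub, sub_eq_zero] at h0
  obtain ⟨k, hk⟩ := exists_eq_zsmul_of_gcd_eq_one hd (e := a - m) <| by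
    simp only [Prod.fst_sub, Prod.snd_sub]
    exact_mod_cast h0
  exact ⟨k, by rw [← hk]; abel⟩

lemma line_add_smul_mem_sigmaR {A : (ℤ × ℤ) →₀ ℝ} (hA : ∀ a, 0 ≤ A a) {SL : Finset (ℤ × ℤ)}
    (hSL : SL ⊆ A.support) {m d : ℤ × ℤ} {ξ : ℤ × ℤ → ℤ} (hξ : ∀ a ∈ SL, a = m + ξ a • d)
    {u v : ℤ × ℤ} (hu : u ∈ A.support) (hv : v ∈ A.support) (huL : u ∉ SL) (hvL : v ∉ SL)
    (huv : u ≠ v) (hmid : u + v = m + m) {s : ℤ → ℝ}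
    (hs : LineWeight.IsSubweight (SL.image ξ) (fun k => A (m + k • d)) s) {β γ : ℝ}
    (hmass : ∑ k ∈ SL.image ξ, s k = 1 - β) (hγ : |γ| ≤ β / 2) (hβu : β ≤ A u)
    (hβv : β ≤ A v) :
    toR2 m + LineWeight.moment (SL.image ξ) s • toR2 d + γ • (toR2 u - toR2 v) ∈ sigmaR 1 A := by
  have hinj : Set.InjOn ξ SL := fun a ha b hb h => by rw [hξ a ha, hξ b hb, h]
  obtain ⟨hγ₁, hγ₂⟩ := abs_le.mp hγ
  refine ⟨fun a => (if a ∈ SL then s (ξ a) else 0) + (Pi.single u (β / 2 + γ) : ℤ × ℤ → ℝ) a +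
    (Pi.single v (β / 2 - γ) : ℤ × ℤ → ℝ) a, fun a => ?_, ?_, ?_⟩
  · by_cases ha : a ∈ SL
    · have hsa : 0 ≤ s (ξ a) ∧ s (ξ a) ≤ A (m + ξ a • d) := hs (ξ a) (Finset.mem_image_of_mem ξ ha)
      rw [← hξ a ha] at hsa
      simpa [ha, Pi.single_apply, ne_of_mem_of_not_mem ha huL, ne_of_mem_of_not_mem ha hvL]
        using hsa
    · rcases eq_or_ne a u with rfl | hau
      · simp [ha, huv]; constructor <;> linarith
      rcases eq_or_ne a v with rfl | hav
      · simp [ha, hau]; constructor <;> linarith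
      · simp [ha, hau, hav, hA a]
  · simp only [Finset.sum_add_distrib, Finset.sum_ite_mem, Finset.inter_eq_right.mpr hSL,
      Finset.sum_pi_single', hu, hv, if_true, ← Finset.sum_image hinj, hmass]
    ring
  · have hsum : ∑ a ∈ SL, s (ξ a) • toR2 a = (1 - β) • toR2 m +
        LineWeight.moment (SL.image ξ) s • toR2 d := by
      rw [LineWeight.moment, Finset.sum_image hinj, ← hmass, Finset.sum_image hinj,
        Finset.sum_smul, Finset.sum_smul, ← Finset.sum_add_distrib]
      refine Finset.sum_congr rfl fun a ha => ?_
      rw [show toR2 a = toR2 m + (ξ a : ℝ) • toR2 d by rw [← toR2_zsmul, ← toR2_add, ← hξ a ha]]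
      module
    have hm : toR2 u + toR2 v = toR2 m + toR2 m := by rw [← toR2_add, ← toR2_add, hmid]
    simp only [add_smul, ite_smul, zero_smul, Finset.sum_add_distrib, Finset.sum_ite_mem,
      Finset.inter_eq_right.mpr hSL, hsum, Pi.single_apply, Finset.sum_ite_eq', hu, hv, if_true]
    rw [show toR2 v = toR2 m + toR2 m - toR2 u by rw [← hm]; abel]
    module

theorem exists_mem_interior_sigmaR_of_lineMult_eq {A : (ℤ × ℤ) →₀ ℝ} (hA : ∀ a, 0 ≤ A a)
    (hmax : ∀ a, A a ≤ 1 / 2) {q w : ℝ × ℝ} (hw : w ≠ 0) (hL : lineMult A q w = 3 / 2)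
    {u v m : ℤ × ℤ} (hm : ∃ r : ℝ, toR2 m = q + r • w) (hu : ¬∃ r : ℝ, toR2 u = q + r • w)
    (hv : ¬∃ r : ℝ, toR2 v = q + r • w) (hAu : 0 < A u) (hAv : 0 < A v)
    (hmid : u + v = m + m) :
    ∃ x : ℤ × ℤ, toR2 x ∈ interior (sigmaR 1 A) := by
  set SL := A.support.filter fun a => ∃ r : ℝ, toR2 a = q + r • w
  have hSL : ∑ a ∈ SL, A a = 3 / 2 := by rw [Finset.sum_filter]; exact hL
  obtain ⟨a₁, ha₁, a₂, ha₂, h₁₂⟩ : ∃ a₁ ∈ SL, ∃ a₂ ∈ SL, a₁ ≠ a₂ := by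
    rw [← Finset.one_lt_card]
    by_contra! h
    have hle := Finset.sum_le_card_nsmul SL A (1 / 2) fun a _ => hmax a
    rw [hSL, nsmul_eq_mul] at hle
    linarith [show (SL.card : ℝ) ≤ 1 by exact_mod_cast h]
  obtain ⟨d, hlattice, hline⟩ := exists_lattice_direction hw hm (Finset.mem_filter.mp ha₁).2
    (Finset.mem_filter.mp ha₂).2 h₁₂
  choose! ξ hξ using fun a (ha : a ∈ SL) => hlattice a (Finset.mem_filter.mp ha).2
  have hinj : Set.InjOn ξ SL := fun a ha b hb h => by rw [hξ a ha, hξ b hb, h]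
  obtain ⟨x, hx⟩ := LineWeight.exists_int_strictly_between_moments (S := SL.image ξ)
    (w := fun k => A (m + k • d)) (fun k _ => hA _) (fun k _ => hmax _) <| by
      rw [Finset.sum_image hinj, ← hSL]
      exact Finset.sum_congr rfl fun a ha => by rw [← hξ a ha]
  obtain ⟨β, ⟨⟨s₁, hs₁, hm₁, hlt⟩, ⟨s₂, hs₂, hm₂, hgt⟩⟩, hβ⟩ :=
    (hx.and (Ioo_mem_nhdsGT (lt_min hAu hAv))).exists
  have huv : u ≠ v := by
    rintro rfl
    obtain rfl := eq_of_add_self_eq_add_self hmid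
    exact hu hm
  have hcross : cross (toR2 d) (toR2 u - toR2 v) ≠ 0 := by
    rw [cross_sub_of_add_eq hmid]
    exact mul_ne_zero two_ne_zero fun h => hu ((hline _).mpr h)
  have hmem := fun {s : ℤ → ℝ} (hs : LineWeight.IsSubweight (SL.image ξ) (fun k => A (m + k • d)) s)
      (hms : ∑ k ∈ SL.image ξ, s k = 1 - β) (γ : ℝ) (hγ : |γ| ≤ β / 2) =>
    line_add_smul_mem_sigmaR hA (Finset.filter_subset _ _) hξ
      (Finsupp.mem_support_iff.mpr hAu.ne') (Finsupp.mem_support_iff.mpr hAv.ne')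
      (fun h => hu (Finset.mem_filter.mp h).2) (fun h => hv (Finset.mem_filter.mp h).2)
      huv hmid hs hms hγ (hβ.2.le.trans (min_le_left _ _)) (hβ.2.le.trans (min_le_right _ _))
  refine ⟨m + x • d, ?_⟩
  rw [toR2_add, toR2_zsmul]
  exact add_smul_mem_interior (convex_sigmaR 1 A) hcross hlt hgt (half_pos hβ.1) (hmem hs₁ hm₁)
    (hmem hs₂ hm₂)

lemma exists_mem_support_not_on_line {A : (ℤ × ℤ) →₀ ℝ} {q w : ℝ × ℝ}
    (h : lineMult A q w < ∑ a ∈ A.support, A a) :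
    ∃ p ∈ A.support, ¬∃ r : ℝ, toR2 p = q + r • w := by
  by_contra! hall
  rw [lineMult, Finset.sum_congr rfl fun a ha => if_pos (hall a ha)] at h
  exact lt_irrefl _ h

lemma exists_on_line_of_add_eq {q w : ℝ × ℝ} {u v m : ℤ × ℤ} (hu : ∃ r : ℝ, toR2 u = q + r • w)
    (hm : ∃ r : ℝ, toR2 m = q + r • w) (hmid : u + v = m + m) : ∃ r : ℝ, toR2 v = q + r • w := by
  obtain ⟨ru, hru⟩ := hu
  obtain ⟨rm, hrm⟩ := hm
  refine ⟨2 * rm - ru, ?_⟩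
  have h := congrArg toR2 hmid
  rw [toR2_add, toR2_add, hru, hrm] at h
  rw [show toR2 v = (q + rm • w) + (q + rm • w) - (q + ru • w) by rw [← h]; abel]
  module

theorem eq_half_of_add_eq_add_self {A : (ℤ × ℤ) →₀ ℝ} (hA : ∀ a, 0 ≤ A a)
    (hlen : ∑ a ∈ A.support, A a = 3.99) (hmax : ∀ a, A a ≤ 1 / 2)
    (hline : ∀ q w : ℝ × ℝ, w ≠ 0 → lineMult A q w ≤ 3 / 2) (hrepl : ReplacementClosed A)
    (hnoint : ¬∃ x : ℤ × ℤ, toR2 x ∈ interior (sigmaR 1 A)) {u v m : ℤ × ℤ} (hu : A u ≠ 0)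
    (hv : A v ≠ 0) (huv : u ≠ v) (hmid : u + v = m + m) : A m = 1 / 2 := by
  by_contra hm
  have hAu : 0 < A u := (hA u).lt_of_ne' hu
  have hAv : 0 < A v := (hA v).lt_of_ne' hv
  obtain ⟨p, hp, hpL⟩ := exists_mem_support_not_on_line (q := toR2 u) (w := toR2 v - toR2 u) <| by
    rw [hlen]
    linarith [hline (toR2 u) _ (sub_ne_zero.mpr (toR2_injective.ne huv.symm))]
  have hm' : toR2 m = (1 / 2 : ℝ) • toR2 u + (1 / 2 : ℝ) • toR2 v := by
    have h := congrArg toR2 hmid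
    rw [toR2_add, toR2_add] at h
    rw [← smul_add, h]; module
  have huL : ∃ r : ℝ, toR2 u = toR2 u + r • (toR2 v - toR2 u) := ⟨0, by simp⟩
  have hvL : ∃ r : ℝ, toR2 v = toR2 u + r • (toR2 v - toR2 u) := ⟨1, by simp⟩
  have hmL : ∃ r : ℝ, toR2 m = toR2 u + r • (toR2 v - toR2 u) := ⟨1 / 2, by rw [hm']; module⟩
  have hseg : toR2 m ∈ segment ℝ (toR2 u) (toR2 v) :=
    ⟨1 / 2, 1 / 2, by norm_num, by norm_num, by norm_num, hm'.symm⟩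
  have hmu : m ≠ u := by
    rintro rfl; exact huv (add_left_cancel hmid).symm
  have hmv : m ≠ v := by
    rintro rfl; exact huv (add_right_cancel hmid)
  rcases hrepl u v p m huv (by rintro rfl; exact hpL huL) (by rintro rfl; exact hpL hvL) hmu hmv
      (by rintro rfl; exact hpL hmL) hAu hAv ((hA p).lt_of_ne' (Finsupp.mem_support_iff.mp hp))
      (segment_subset_convexHull (by simp) (by simp) hseg) with h | ⟨q, w, hw, hmq, hL, hside⟩
  · exact hm h
  have hnot := hside u v (by simp) (by simp) huv hseg
  exact hnoint <| exists_mem_interior_sigmaR_of_lineMult_eq hA hmax hw hL hmq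
    (fun h => hnot ⟨h, exists_on_line_of_add_eq h hmq hmid⟩)
    (fun h => hnot ⟨exists_on_line_of_add_eq h hmq (by rw [add_comm, hmid]), h⟩) hAu hAv hmid

def parity (a : ℤ × ℤ) : ZMod 2 × ZMod 2 := ((a.1 : ZMod 2), (a.2 : ZMod 2))

lemma exists_add_eq_add_self_of_parity_eq {a b : ℤ × ℤ} (h : parity a = parity b) :
    ∃ m, a + b = m + m := by
  simp only [parity, Prod.ext_iff, ZMod.intCast_eq_intCast_iff_dvd_sub] at h
  obtain ⟨⟨k, hk⟩, ⟨l, hl⟩⟩ := h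
  exact ⟨(a.1 + k, a.2 + l), Prod.ext (by simp; omega) (by simp; omega)⟩

lemma card_filter_ne_zero_le_four {S : Finset (ℤ × ℤ)} {η : ℤ × ℤ → ℝ}
    (hopp : ∀ a ∈ S, ∀ b ∈ S, a ≠ b → parity a = parity b → η a + η b = 0) {s s' : ℤ × ℤ}
    (hs : s ∈ S) (hs' : s' ∈ S) (hηs : η s = 0) (hηs' : η s' = 0) (hss' : parity s ≠ parity s') :
    (S.filter (η · ≠ 0)).card ≤ 4 := by
  set T : Finset (Bool × (ZMod 2 × ZMod 2)) := Finset.univ ×ˢ (Finset.univ \ {parity s, parity s'})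
  have hmaps : Set.MapsTo (fun a => (decide (0 < η a), parity a)) (S.filter (η · ≠ 0)) T := by
    intro a ha
    obtain ⟨haS, ha0⟩ := Finset.mem_filter.mp ha
    have hoff : ∀ t ∈ S, η t = 0 → parity a ≠ parity t := fun t ht hηt hpar => by
      rcases eq_or_ne a t with rfl | hat
      · exact ha0 hηt
      · exact ha0 (by linarith [hopp a haS t ht hat hpar])
    simp only [T, Finset.coe_product, Set.mem_prod, Finset.coe_univ, Set.mem_univ, true_and,
      Finset.coe_sdiff, Set.mem_sdiff, Finset.coe_insert, Finset.coe_singleton,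
      Set.mem_insert_iff, Set.mem_singleton_iff, not_or]
    exact ⟨hoff s hs hηs, hoff s' hs' hηs'⟩
  have hinj : Set.InjOn (fun a => (decide (0 < η a), parity a)) (S.filter (η · ≠ 0)) := by
    intro a ha b hb hab
    obtain ⟨haS, ha0⟩ := Finset.mem_filter.mp ha
    simp only [Prod.mk.injEq, decide_eq_decide] at hab
    by_contra hne
    rw [show η b = -η a by linarith [hopp a haS b (Finset.mem_filter.mp hb).1 hne hab.2],
      neg_pos] at hab
    rcases lt_or_gt_of_ne ha0 with h | h
    · exact lt_asymm h (hab.1.mpr h)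
    · exact lt_asymm h (hab.1.mp h)
  have := Finset.card_le_card_of_injOn _ hmaps hinj
  rwa [Finset.card_product, Finset.card_univ_sdiff, Finset.card_pair hss'] at this

section HalfPoints

variable {A : (ℤ × ℤ) →₀ ℝ}
  (hmid : ∀ u v m : ℤ × ℤ, A u ≠ 0 → A v ≠ 0 → u ≠ v → u + v = m + m → A m = 1 / 2)
include hmid

lemma card_support_le_seven (hH : ∀ a b, A a = 1 / 2 → A b = 1 / 2 → a = b) :
    A.support.card ≤ 7 := by
  by_contra! hcard
  obtain ⟨a, ha, b, hb, hab, hpar⟩ := Finset.exists_ne_map_eq_of_card_lt_of_maps_to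
    (s := A.support) (t := (Finset.univ : Finset (ZMod 2 × ZMod 2))) (f := parity) (by simp; omega)
    fun _ _ => Finset.mem_coe.mpr (Finset.mem_univ _)
  obtain ⟨p, hp⟩ := exists_add_eq_add_self_of_parity_eq hpar
  have hAp := hmid a b p (Finsupp.mem_support_iff.mp ha) (Finsupp.mem_support_iff.mp hb) hab hp
  have hfib : ∀ c, (A.support.filter (parity · = c)).card ≤ if c = parity p then 1 else 2 := by
    intro c
    split_ifs with hc
    · suffices ∀ x ∈ A.support.filter (parity · = c), x = p from
        Finset.card_le_one.mpr fun x hx y hy => by rw [this x hx, this y hy]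
      intro x hx
      obtain ⟨hxs, hxc⟩ := Finset.mem_filter.mp hx
      by_contra hxp
      obtain ⟨m, hm⟩ := exists_add_eq_add_self_of_parity_eq (hxc.trans hc)
      obtain rfl := hH _ _ (hmid x p m (Finsupp.mem_support_iff.mp hxs) (by rw [hAp]; norm_num)
        hxp hm) hAp
      exact hxp (add_right_cancel hm)
    · by_contra! h3
      obtain ⟨x, hx, y, hy, z, hz, hxy, hxz, hyz⟩ := Finset.two_lt_card.mp h3
      simp only [Finset.mem_filter, Finsupp.mem_support_iff] at hx hy hz
      obtain ⟨m, hm⟩ := exists_add_eq_add_self_of_parity_eq (hx.2.trans hy.2.symm)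
      obtain ⟨m', hm'⟩ := exists_add_eq_add_self_of_parity_eq (hx.2.trans hz.2.symm)
      obtain rfl := hH _ _ (hmid x y m hx.1 hy.1 hxy hm) (hmid x z m' hx.1 hz.1 hxz hm')
      exact hyz (add_left_cancel (hm.trans hm'.symm))
  have hcount := Finset.card_eq_sum_card_fiberwise (f := parity) (s := A.support)
    (t := Finset.univ) fun _ _ => Finset.mem_coe.mpr (Finset.mem_univ _)
  have hsum : ∀ c₀ : ZMod 2 × ZMod 2, ∑ c, (if c = c₀ then 1 else 2) = 7 := by decide
  have := Finset.sum_le_sum fun c (_ : c ∈ Finset.univ) => hfib c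
  rw [hsum] at this
  omega

lemma exists_half_parity_ne {h₁ h₂ : ℤ × ℤ} (hh₁ : A h₁ = 1 / 2) (hh₂ : A h₂ = 1 / 2)
    (h₁₂ : h₁ ≠ h₂) : ∃ s s', A s = 1 / 2 ∧ A s' = 1 / 2 ∧ parity s ≠ parity s' := by
  set H := A.support.filter (A · = 1 / 2)
  have hH : ∀ a, a ∈ H ↔ A a = 1 / 2 := fun a => by
    simp only [H, Finset.mem_filter, Finsupp.mem_support_iff, and_iff_right_iff_imp]
    intro h; rw [h]; norm_num
  set P := (H ×ˢ H).filter fun p => p.1 ≠ p.2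
  have hP : ∀ s s', (s, s') ∈ P ↔ A s = 1 / 2 ∧ A s' = 1 / 2 ∧ s ≠ s' := fun s s' => by
    simp only [P, Finset.mem_filter, Finset.mem_product, hH, and_assoc]
  -- a closest pair of distinct half points
  obtain ⟨⟨s, s'⟩, hss, hmin⟩ := P.exists_min_image
    (fun p => (p.1.1 - p.2.1).natAbs + (p.1.2 - p.2.2).natAbs)
    ⟨(h₁, h₂), (hP _ _).mpr ⟨hh₁, hh₂, h₁₂⟩⟩
  obtain ⟨hs, hs', hne⟩ := (hP s s').mp hss
  refine ⟨s, s', hs, hs', fun hpar => ?_⟩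
  obtain ⟨m, hm⟩ := exists_add_eq_add_self_of_parity_eq hpar
  have hAm := hmid s s' m (by rw [hs]; norm_num) (by rw [hs']; norm_num) hne hm
  have hsm : s ≠ m := by rintro rfl; exact hne (add_left_cancel hm).symm
  have hle := hmin (s, m) ((hP s m).mpr ⟨hs, hAm, hsm⟩)
  have h1 := congrArg Prod.fst hm
  have h2 := congrArg Prod.snd hm
  simp only [Prod.fst_add, Prod.snd_add] at h1 h2 hle
  have : s.1 ≠ m.1 ∨ s.2 ≠ m.2 := by
    by_contra! h; exact hsm (Prod.ext h.1 h.2)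
  omega

lemma sum_le_of_half_on_line (hline : ∀ q w : ℝ × ℝ, w ≠ 0 → lineMult A q w ≤ 3 / 2)
    (hmax : ∀ a, A a ≤ 1 / 2) {h₁ h₂ : ℤ × ℤ} (hh₁ : A h₁ = 1 / 2) (hh₂ : A h₂ = 1 / 2)
    (h₁₂ : h₁ ≠ h₂) (hcol : ∀ z, A z = 1 / 2 → cross (toR2 h₂ - toR2 h₁) (toR2 z - toR2 h₁) = 0) :
    ∑ a ∈ A.support, A a ≤ 7 / 2 := by
  set η := fun a : ℤ × ℤ => cross (toR2 h₂ - toR2 h₁) (toR2 a - toR2 h₁)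
  have hw : toR2 h₂ - toR2 h₁ ≠ 0 := sub_ne_zero.mpr (toR2_injective.ne h₁₂.symm)
  have hopp : ∀ a ∈ A.support, ∀ b ∈ A.support, a ≠ b → parity a = parity b → η a + η b = 0 := by
    intro a ha b hb hab hpar
    obtain ⟨m, hm⟩ := exists_add_eq_add_self_of_parity_eq hpar
    rw [cross_add_cross_of_add_eq hm, hcol m (hmid a b m (Finsupp.mem_support_iff.mp ha)
      (Finsupp.mem_support_iff.mp hb) hab hm), mul_zero]
  obtain ⟨s, s', hs, hs', hss'⟩ := exists_half_parity_ne hmid hh₁ hh₂ h₁₂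
  have hmem : ∀ t, A t = 1 / 2 → t ∈ A.support := fun t ht =>
    Finsupp.mem_support_iff.mpr (by rw [ht]; norm_num)
  have hcard := card_filter_ne_zero_le_four hopp (hmem s hs) (hmem s' hs') (hcol s hs)
    (hcol s' hs') hss'
  have hon : ∑ a ∈ A.support with η a = 0, A a ≤ 3 / 2 := by
    have := hline (toR2 h₁) _ hw
    rw [lineMult, ← Finset.sum_filter] at this
    simpa only [exists_eq_add_smul_iff hw] using this
  have hoff : ∑ a ∈ A.support with η a ≠ 0, A a ≤ 2 := by
    have := Finset.sum_le_card_nsmul (A.support.filter (η · ≠ 0)) A (1 / 2) fun a _ => hmax a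
    rw [nsmul_eq_mul] at this
    linarith [show ((A.support.filter (η · ≠ 0)).card : ℝ) ≤ 4 by exact_mod_cast hcard]
  rw [← Finset.sum_filter_add_sum_filter_not A.support (η · = 0)]
  linarith

end HalfPoints

/-- a good real sequence with the replacement-closure property whose
Σ¹_R(A) has no interior lattice point contains three affinely independent points of
multiplicity exactly 1/2. -/
theorem stmt7 (A : (ℤ × ℤ) →₀ ℝ)
    (hnonneg : ∀ a, 0 ≤ A a)
    (hlen : (∑ a ∈ A.support, A a) = 3.99)
    (hmax : ∀ a, A a ≤ 1 / 2)
    (hline : ∀ q w : ℝ × ℝ, w ≠ 0 → lineMult A q w ≤ 3 / 2)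
    (hrepl : ReplacementClosed A)
    (hnoint : ¬ ∃ x : ℤ × ℤ, toR2 x ∈ interior (sigmaR 1 A)) :
    ∃ a b c : ℤ × ℤ, A a = 1 / 2 ∧ A b = 1 / 2 ∧ A c = 1 / 2 ∧
      ¬ Collinear ℝ ({toR2 a, toR2 b, toR2 c} : Set (ℝ × ℝ)) := by
  have hmid := fun u v m => eq_half_of_add_eq_add_self hnonneg hlen hmax hline hrepl hnoint
    (u := u) (v := v) (m := m)
  by_contra! hcol
  by_cases hH : ∃ h₁ h₂, A h₁ = 1 / 2 ∧ A h₂ = 1 / 2 ∧ h₁ ≠ h₂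
  · obtain ⟨h₁, h₂, hh₁, hh₂, h₁₂⟩ := hH
    have := sum_le_of_half_on_line hmid hline hmax hh₁ hh₂ h₁₂ fun z hz =>
      cross_sub_eq_zero_of_collinear (hcol h₁ h₂ z hh₁ hh₂ hz)
    rw [hlen] at this
    norm_num at this
  · have h7 := card_support_le_seven hmid fun a b ha hb => by
      by_contra h; exact hH ⟨a, b, ha, hb, h⟩
    have := Finset.sum_le_card_nsmul A.support A (1 / 2) fun a _ => hmax a
    rw [hlen, nsmul_eq_mul] at this
    linarith [show (A.support.card : ℝ) ≤ 7 by exact_mod_cast h7]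

end
end

section
/- Let C ≥ 1 and let A be a sequence over Z² all of whose elements have both coordinates bounded in absolute value by C. If y = Σ t_i a_i with non-negative reals t_i and Σ t_i = T for elements a_i of A (at most (2C+1)² distinct values), then there exist non-negative integers t̃_i with |t_i - t̃_i| < 1, Σ t̃_i = ⌈T⌉, and |y - Σ t̃_i a_i| ≤ C(2C+1)² in the Euclidean norm. -/
/-!
Write `t a = ⌊t a⌋₊ + f a` and round up exactly the `⌈∑ f⌉₊` coefficients with the largest
fractional parts, which fixes the sum. The fractional mass left unrounded is at most `n / 4` for
`n = #s ≤ (2C+1)²`, so the total rounding error `∑ |t a - t̃ a|` is at most `n / 2 + 1`; each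
coordinate of the error vector is then at most `C (n / 2 + 1)`, and `√2 (K / 2 + 1) ≤ K` for
`K = (2C+1)² ≥ 9`.
-/

noncomputable section

namespace Finset

variable {α β : Type*} [DecidableEq α]

theorem exists_subset_card_eq_forall_sdiff_le [LinearOrder β] (g : α → β) :
    ∀ {d : ℕ} {s : Finset α}, d ≤ #s →
      ∃ U ⊆ s, #U = d ∧ ∀ i ∈ U, ∀ j ∈ s \ U, g j ≤ g i
  | 0, s, _ => ⟨∅, empty_subset s, rfl, by simp⟩
  | d + 1, s, hd => by
    obtain ⟨m, hm, hmax⟩ := s.exists_max_image g (card_pos.mp (by omega))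
    obtain ⟨U, hUs, hcard, htop⟩ :=
      exists_subset_card_eq_forall_sdiff_le g (d := d) (s := s.erase m)
        (by rw [card_erase_of_mem hm]; omega)
    have hmU : m ∉ U := fun h => (mem_erase.mp (hUs h)).1 rfl
    refine ⟨insert m U, insert_subset hm (hUs.trans (erase_subset m s)), by
      rw [card_insert_of_notMem hmU, hcard], ?_⟩
    intro i hi j hj
    obtain ⟨hjs, hjU⟩ := mem_sdiff.mp hj
    rcases mem_insert.mp hi with rfl | hiU
    · exact hmax j hjs
    · refine htop i hiU j
        (mem_sdiff.mpr ⟨mem_erase.mpr ⟨?_, hjs⟩, fun h => hjU (mem_insert_of_mem h)⟩)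
      rintro rfl
      exact hjU (mem_insert_self j U)

end Finset

open Finset

section Rounding

variable {α : Type*} [DecidableEq α] {s U : Finset α} {f : α → ℝ}

/-- With `τ` the largest value outside `U`, the mass outside `U` is at most both `(#s - #U) τ`
and `#U (1 - τ)`; the combination of these with weights `1 - τ` and `τ` is `τ (1 - τ) #s`. -/
theorem sum_sdiff_le_card_div_four (hU : U ⊆ s) (hf : ∀ a ∈ s, f a ∈ Set.Icc (0 : ℝ) 1)
    (htop : ∀ i ∈ U, ∀ j ∈ s \ U, f j ≤ f i) (hsum : ∑ a ∈ s, f a ≤ #U) :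
    ∑ a ∈ s \ U, f a ≤ #s / 4 := by
  rcases (s \ U).eq_empty_or_nonempty with hempty | hne
  · rw [hempty, sum_empty]
    positivity
  obtain ⟨j, hj, hjmax⟩ := (s \ U).exists_max_image f hne
  obtain ⟨hτ0, hτ1⟩ := hf j (mem_sdiff.mp hj).1
  set τ := f j
  have houter : ∑ a ∈ s \ U, f a ≤ (#s - #U) * τ := by
    have := sum_le_card_nsmul (s \ U) f τ hjmax
    rwa [card_sdiff_of_subset hU, nsmul_eq_mul, Nat.cast_sub (card_le_card hU)] at this
  have hinner : #U * τ ≤ ∑ a ∈ U, f a := by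
    have := card_nsmul_le_sum U f τ fun i hi => htop i hi j hj
    rwa [nsmul_eq_mul] at this
  have hsplit := sum_sdiff hU (f := f)
  nlinarith [mul_nonneg hτ0 (sub_nonneg.mpr hτ1), sq_nonneg (2 * τ - 1)]

theorem exists_subset_card_eq_ceil_sum_forall_sdiff_le
    (hf : ∀ a ∈ s, f a ∈ Set.Ico (0 : ℝ) 1) :
    ∃ U ⊆ s, #U = ⌈∑ a ∈ s, f a⌉₊ ∧ (∀ a ∈ U, 0 < f a) ∧ ∀ i ∈ U, ∀ j ∈ s \ U, f j ≤ f i := by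
  set s' := s.filter (0 < f ·)
  have hs' : ∑ a ∈ s, f a ≤ #s' :=
    calc ∑ a ∈ s, f a = ∑ a ∈ s', f a :=
          (sum_filter_of_ne fun a ha h => (hf a ha).1.lt_of_ne' h).symm
      _ ≤ #s' • 1 := sum_le_card_nsmul s' f 1 fun a ha => (hf a (mem_filter.mp ha).1).2.le
      _ = #s' := by simp
  obtain ⟨U, hUs', hcard, htop⟩ :=
    exists_subset_card_eq_forall_sdiff_le f (Nat.ceil_le.mpr hs')
  have hpos : ∀ a ∈ U, 0 < f a := fun a ha => (mem_filter.mp (hUs' ha)).2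
  refine ⟨U, hUs'.trans (filter_subset _ s), hcard, hpos, fun i hi j hj => ?_⟩
  obtain ⟨hjs, hjU⟩ := mem_sdiff.mp hj
  by_cases hj0 : 0 < f j
  · exact htop i hi j (mem_sdiff.mpr ⟨mem_filter.mpr ⟨hjs, hj0⟩, hjU⟩)
  · exact (not_lt.mp hj0).trans (hpos i hi).le

theorem exists_subset_card_eq_ceil_sum_abs_sub_le (hf : ∀ a ∈ s, f a ∈ Set.Ico (0 : ℝ) 1) :
    ∃ U ⊆ s, #U = ⌈∑ a ∈ s, f a⌉₊ ∧ (∀ a ∈ s, |f a - if a ∈ U then 1 else 0| < 1) ∧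
      ∑ a ∈ s, |f a - if a ∈ U then 1 else 0| ≤ #s / 2 + 1 := by
  obtain ⟨U, hUs, hcard, hpos, htop⟩ := exists_subset_card_eq_ceil_sum_forall_sdiff_le hf
  have houter : ∑ a ∈ s \ U, f a ≤ #s / 4 :=
    sum_sdiff_le_card_div_four hUs (fun a ha => Set.Ico_subset_Icc_self (hf a ha)) htop
      (hcard ▸ Nat.le_ceil _)
  have hceil : (#U : ℝ) < ∑ a ∈ s, f a + 1 :=
    hcard ▸ Nat.ceil_lt_add_one (sum_nonneg fun a ha => (hf a ha).1)
  refine ⟨U, hUs, hcard, fun a ha => ?_, ?_⟩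
  · obtain ⟨hfa0, hfa1⟩ := hf a ha
    rw [abs_lt]
    by_cases haU : a ∈ U
    · simp only [if_pos haU]; constructor <;> linarith [hpos a haU]
    · simp only [if_neg haU]; constructor <;> linarith
  · have hout : ∑ a ∈ s \ U, |f a - if a ∈ U then 1 else 0| = ∑ a ∈ s \ U, f a :=
      sum_congr rfl fun a ha => by
        rw [if_neg (mem_sdiff.mp ha).2, sub_zero, abs_of_nonneg (hf a (mem_sdiff.mp ha).1).1]
    have hin : ∑ a ∈ U, |f a - if a ∈ U then 1 else 0| = #U - ∑ a ∈ U, f a := by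
      rw [sum_congr rfl fun a ha => by
        rw [if_pos ha, abs_sub_comm, abs_of_nonneg (sub_nonneg.mpr (hf a (hUs ha)).2.le)]]
      simp
    have hsplit : ∑ a ∈ s \ U, f a + ∑ a ∈ U, f a = ∑ a ∈ s, f a := sum_sdiff hUs
    rw [← sum_sdiff hUs, hout, hin]
    linarith

end Rounding

theorem sum_floor_add_ceil_sum_sub_floor_eq_ceil_sum {ι : Type*} {s : Finset ι} {t : ι → ℝ}
    (ht : ∀ a ∈ s, 0 ≤ t a) :
    ((∑ a ∈ s, ⌊t a⌋₊ + ⌈∑ a ∈ s, (t a - ⌊t a⌋₊)⌉₊ : ℕ) : ℤ) = ⌈∑ a ∈ s, t a⌉ := by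
  have hfract : 0 ≤ ∑ a ∈ s, (t a - ⌊t a⌋₊) :=
    sum_nonneg fun a ha => sub_nonneg.mpr (Nat.floor_le (ht a ha))
  rw [Nat.cast_add, Int.natCast_ceil_eq_ceil hfract, add_comm, ← Int.ceil_add_natCast,
    Nat.cast_sum, sum_sub_distrib, sub_add_cancel]

theorem abs_sum_mul_sub_sum_mul_le {ι : Type*} {s : Finset ι} {u v g : ι → ℝ} {C : ℝ}
    (hg : ∀ a ∈ s, |g a| ≤ C) :
    |∑ a ∈ s, u a * g a - ∑ a ∈ s, v a * g a| ≤ C * ∑ a ∈ s, |u a - v a| := by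
  rw [← sum_sub_distrib, mul_sum]
  refine (abs_sum_le_sum_abs _ _).trans (sum_le_sum fun a ha => ?_)
  rw [← sub_mul, abs_mul, mul_comm]
  exact mul_le_mul_of_nonneg_right (hg a ha) (abs_nonneg _)

theorem card_le_sq_of_abs_le {s : Finset (ℤ × ℤ)} {C : ℝ} (hC : 0 ≤ C)
    (h : ∀ a ∈ s, |(a.1 : ℝ)| ≤ C ∧ |(a.2 : ℝ)| ≤ C) : (#s : ℝ) ≤ (2 * C + 1) ^ 2 := by
  set M := ⌊C⌋
  have hM0 : 0 ≤ M := Int.floor_nonneg.mpr hC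
  have hmem : ∀ x : ℤ, |(x : ℝ)| ≤ C → x ∈ Icc (-M) M := fun x hx =>
    mem_Icc.mpr (abs_le.mp (Int.le_floor.mpr (by exact_mod_cast hx)))
  have hsub : s ⊆ Icc (-M) M ×ˢ Icc (-M) M := fun a ha =>
    mem_product.mpr ⟨hmem _ (h a ha).1, hmem _ (h a ha).2⟩
  have hIcc : (#(Icc (-M) M) : ℝ) = 2 * M + 1 := by
    have hlen : ((M + 1 - -M).toNat : ℤ) = 2 * M + 1 := by omega
    rw [Int.card_Icc]
    exact_mod_cast hlen
  calc (#s : ℝ) ≤ #(Icc (-M) M ×ˢ Icc (-M) M) := by exact_mod_cast card_le_card hsub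
    _ = (2 * M + 1) ^ 2 := by rw [card_product, Nat.cast_mul, hIcc, sq]
    _ ≤ (2 * C + 1) ^ 2 := by
      have : (0 : ℝ) ≤ M := by exact_mod_cast hM0
      gcongr
      exact Int.floor_le C

theorem sqrt_sq_add_sq_le_of_abs_le {C e₁ e₂ : ℝ} (hC : 1 ≤ C)
    (h₁ : |e₁| ≤ C * ((2 * C + 1) ^ 2 / 2 + 1)) (h₂ : |e₂| ≤ C * ((2 * C + 1) ^ 2 / 2 + 1)) :
    √(e₁ ^ 2 + e₂ ^ 2) ≤ C * (2 * C + 1) ^ 2 := by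
  set K := (2 * C + 1) ^ 2
  have hK : 9 ≤ K := by nlinarith
  have hsq₁ := sq_abs e₁ ▸ pow_le_pow_left₀ (abs_nonneg e₁) h₁ 2
  have hsq₂ := sq_abs e₂ ▸ pow_le_pow_left₀ (abs_nonneg e₂) h₂ 2
  -- `2 (K / 2 + 1)² ≤ K²` as soon as `K ≥ 2 + 2√2`
  have hcoef : 2 * (K / 2 + 1) ^ 2 ≤ K ^ 2 := by nlinarith
  rw [Real.sqrt_le_left (by positivity)]
  nlinarith [mul_le_mul_of_nonneg_left hcoef (sq_nonneg C)]

/-- rounding real coefficients bounded-coordinate lattice points: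
if y = Σ t_i a_i with t_i ≥ 0, Σ t_i = T and all coordinates of the a_i bounded by C,
then there are non-negative integers t̃_i with |t_i - t̃_i| < 1, Σ t̃_i = ⌈T⌉ and
|y - Σ t̃_i a_i| ≤ C(2C+1)² in the Euclidean norm. -/
theorem stmt13 (C : ℝ) (hC : 1 ≤ C) (s : Finset (ℤ × ℤ))
    (hbound : ∀ a ∈ s, |(a.1 : ℝ)| ≤ C ∧ |(a.2 : ℝ)| ≤ C)
    (t : (ℤ × ℤ) → ℝ) (ht : ∀ a, 0 ≤ t a)
    (T : ℝ) (hT : (∑ a ∈ s, t a) = T)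
    (y : ℝ × ℝ) (hy : (∑ a ∈ s, t a • toR2 a) = y) :
    ∃ tt : (ℤ × ℤ) → ℕ,
      (∀ a ∈ s, |t a - (tt a : ℝ)| < 1) ∧
      (∑ a ∈ s, (tt a : ℤ)) = ⌈T⌉ ∧
      Real.sqrt ((y.1 - ∑ a ∈ s, (tt a : ℝ) * (a.1 : ℝ)) ^ 2 +
        (y.2 - ∑ a ∈ s, (tt a : ℝ) * (a.2 : ℝ)) ^ 2) ≤ C * (2 * C + 1) ^ 2 := by
  classical
  set f : ℤ × ℤ → ℝ := fun a => t a - ⌊t a⌋₊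
  have hf : ∀ a ∈ s, f a ∈ Set.Ico 0 1 := fun a _ =>
    ⟨sub_nonneg.mpr (Nat.floor_le (ht a)), by linarith [Nat.lt_floor_add_one (t a)]⟩
  obtain ⟨U, hUs, hcard, hround, hdev⟩ := exists_subset_card_eq_ceil_sum_abs_sub_le hf
  set tt : ℤ × ℤ → ℕ := fun a => ⌊t a⌋₊ + if a ∈ U then 1 else 0
  have hδ : ∀ a, t a - tt a = f a - if a ∈ U then 1 else 0 := fun a => by
    simp only [tt, f]; push_cast; ring
  have herror : ∑ a ∈ s, |t a - tt a| ≤ (2 * C + 1) ^ 2 / 2 + 1 := by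
    simp only [hδ]
    linarith [card_le_sq_of_abs_le (by linarith) hbound]
  refine ⟨tt, fun a ha => hδ a ▸ hround a ha, ?_, ?_⟩
  · rw [← hT, ← sum_floor_add_ceil_sum_sub_floor_eq_ceil_sum fun a _ => ht a, ← hcard,
      ← Nat.cast_sum, sum_add_distrib, sum_boole, filter_mem_eq_inter, inter_eq_right.mpr hUs,
      Nat.cast_id]
  · have hy₁ : ∑ a ∈ s, t a * a.1 = y.1 := by rw [← hy, Prod.fst_sum]; rfl
    have hy₂ : ∑ a ∈ s, t a * a.2 = y.2 := by rw [← hy, Prod.snd_sum]; rfl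
    rw [← hy₁, ← hy₂]
    have hC0 : 0 ≤ C := by linarith
    exact sqrt_sq_add_sq_le_of_abs_le hC
      ((abs_sum_mul_sub_sum_mul_le fun a ha => (hbound a ha).1).trans
        (mul_le_mul_of_nonneg_left herror hC0))
      ((abs_sum_mul_sub_sum_mul_le fun a ha => (hbound a ha).2).trans
        (mul_le_mul_of_nonneg_left herror hC0))

end
end
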